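/- arXiv:2508.03667 — 3 statements merged into one kernel-verified Lean document; each statement's English description precedes it below -/
import Mathlib

section
/- Let R be a Γ-graded ring and E a Γ-graded right R-module. Then E is gr-injective if and only if for every graded right ideal U of R, every morphism γ of Γ, and every homomorphism h : U → E of degree γ, there exists a homomorphism h' : R → E of degree γ extending h. -/
open CategoryTheory

universe u

instance addSubgroupNormalOfComm {M : Type*} [AddCommGroup M] (N : AddSubgroup M) :
    N.Normal := ⟨fun n hn g => by simpa [add_comm] using hn⟩

variable {Γ : Type u} [Groupoid.{u} Γ]

/-- The morphisms of the groupoid `Γ`, bundled together with their endpoints.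
For `γ : GrIdx Γ`, the morphism `γ.2.2 : γ.1 ⟶ γ.2.1` has domain `d(γ) = γ.1`
and range `r(γ) = γ.2.1`. -/
abbrev GrIdx (Γ : Type u) [Groupoid.{u} Γ] : Type u := Σ e f : Γ, e ⟶ f

/-- The data of a `Γ`-grading, a multiplication, and local units `1_e` on an
additive group `R`. -/
structure GRingData (Γ : Type u) [Groupoid.{u} Γ] (R : Type u) [AddCommGroup R] :
    Type u where
  mul : R → R → R
  component : ∀ {e f : Γ}, (e ⟶ f) → AddSubgroup R
  one : Γ → R

/-- The data of a right scalar multiplication by `R` and a `Γ`-grading on an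
additive group `M`. -/
structure GModData (Γ : Type u) [Groupoid.{u} Γ] (R : Type u) (M : Type u)
    [AddCommGroup M] : Type u where
  smul : M → R → M
  component : ∀ {e f : Γ}, (e ⟶ f) → AddSubgroup M

namespace GRingData

variable {R : Type u} [AddCommGroup R]

/-- `𝒜` makes `R` an (object unital) `Γ`-graded ring: `R` is an associative ring,
`R = ⊕_γ R_γ`, `R_γ R_δ ⊆ R_{γδ}` when `γδ` is defined and `R_γ R_δ = 0` otherwise,
each `R_e` (`e ∈ Γ₀`) is unital with identity `1_e`, and
`1_{r(γ)} a = a 1_{d(γ)} = a` for all `a ∈ R_γ`. -/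
structure IsObjectUnital (𝒜 : GRingData Γ R) : Prop where
  mul_assoc : ∀ a b c : R, 𝒜.mul (𝒜.mul a b) c = 𝒜.mul a (𝒜.mul b c)
  left_distrib : ∀ a b c : R, 𝒜.mul a (b + c) = 𝒜.mul a b + 𝒜.mul a c
  right_distrib : ∀ a b c : R, 𝒜.mul (a + b) c = 𝒜.mul a c + 𝒜.mul b c
  decompose : ∀ x : R, ∃ (s : Finset (GrIdx Γ)) (cf : GrIdx Γ → R),
      (∀ γ ∈ s, cf γ ∈ 𝒜.component γ.2.2) ∧ x = ∑ γ ∈ s, cf γ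
  independent : ∀ (s : Finset (GrIdx Γ)) (cf : GrIdx Γ → R),
      (∀ γ ∈ s, cf γ ∈ 𝒜.component γ.2.2) → ∑ γ ∈ s, cf γ = 0 → ∀ γ ∈ s, cf γ = 0
  mul_mem : ∀ {e f g : Γ} (γ : e ⟶ f) (δ : g ⟶ e) {a b : R},
      a ∈ 𝒜.component γ → b ∈ 𝒜.component δ → 𝒜.mul a b ∈ 𝒜.component (δ ≫ γ)
  mul_eq_zero : ∀ {e f g h : Γ} (γ : e ⟶ f) (δ : g ⟶ h) {a b : R},
      h ≠ e → a ∈ 𝒜.component γ → b ∈ 𝒜.component δ → 𝒜.mul a b = 0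
  one_mem : ∀ e : Γ, 𝒜.one e ∈ 𝒜.component (𝟙 e)
  one_mul : ∀ {e f : Γ} (γ : e ⟶ f) {a : R}, a ∈ 𝒜.component γ → 𝒜.mul (𝒜.one f) a = a
  mul_one : ∀ {e f : Γ} (γ : e ⟶ f) {a : R}, a ∈ 𝒜.component γ → 𝒜.mul a (𝒜.one e) = a

/-- `R` regarded as a (`Γ`-graded) right module over itself. -/
def toMod (𝒜 : GRingData Γ R) : GModData Γ R R where
  smul := 𝒜.mul
  component := fun γ => 𝒜.component γ

end GRingData

namespace GModData

variable {R : Type u} {M : Type u} {M' : Type u} [AddCommGroup M] [AddCommGroup M']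

/-- `ℳ` makes `M` a unital `Γ`-graded right module over the `Γ`-graded ring `𝒜`:
`M` is a right `R`-module, `M = ⊕_γ M_γ`, `M_σ R_τ ⊆ M_{στ}` when `στ` is defined
and `M_σ R_τ = 0` otherwise, and `m 1_{d(σ)} = m` for all `m ∈ M_σ`. -/
structure IsGraded [AddCommGroup R] (𝒜 : GRingData Γ R) (ℳ : GModData Γ R M) :
    Prop where
  add_smul : ∀ (m n : M) (a : R), ℳ.smul (m + n) a = ℳ.smul m a + ℳ.smul n a
  smul_add : ∀ (m : M) (a b : R), ℳ.smul m (a + b) = ℳ.smul m a + ℳ.smul m b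
  smul_mul : ∀ (m : M) (a b : R), ℳ.smul m (𝒜.mul a b) = ℳ.smul (ℳ.smul m a) b
  decompose : ∀ x : M, ∃ (s : Finset (GrIdx Γ)) (cf : GrIdx Γ → M),
      (∀ γ ∈ s, cf γ ∈ ℳ.component γ.2.2) ∧ x = ∑ γ ∈ s, cf γ
  independent : ∀ (s : Finset (GrIdx Γ)) (cf : GrIdx Γ → M),
      (∀ γ ∈ s, cf γ ∈ ℳ.component γ.2.2) → ∑ γ ∈ s, cf γ = 0 → ∀ γ ∈ s, cf γ = 0
  smul_mem : ∀ {e f g : Γ} (σ : e ⟶ f) (τ : g ⟶ e) {m : M} {a : R},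
      m ∈ ℳ.component σ → a ∈ 𝒜.component τ → ℳ.smul m a ∈ ℳ.component (τ ≫ σ)
  smul_eq_zero : ∀ {e f g h : Γ} (σ : e ⟶ f) (τ : g ⟶ h) {m : M} {a : R},
      h ≠ e → m ∈ ℳ.component σ → a ∈ 𝒜.component τ → ℳ.smul m a = 0
  smul_one : ∀ {e f : Γ} (σ : e ⟶ f) {m : M}, m ∈ ℳ.component σ →
      ℳ.smul m (𝒜.one e) = m

/-- An element of `M` is homogeneous if it belongs to some homogeneous component. -/
def IsHomogeneous (ℳ : GModData Γ R M) (m : M) : Prop :=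
  ∃ (e f : Γ) (γ : e ⟶ f), m ∈ ℳ.component γ

/-- `N` is a graded submodule of `M`: a submodule (subgroup closed under the right
`R`-action) generated by its homogeneous elements, i.e. `N = ⊕_γ (N ∩ M_γ)`. -/
def IsGrSub (ℳ : GModData Γ R M) (N : AddSubgroup M) : Prop :=
  (∀ m ∈ N, ∀ a : R, ℳ.smul m a ∈ N) ∧
  ∀ n ∈ N, n ∈ AddSubgroup.closure {x : M | x ∈ N ∧ ℳ.IsHomogeneous x}

/-- `M` is gr-noetherian: there is no strictly increasing infinite chain of graded
submodules. -/
def GrNoetherian (ℳ : GModData Γ R M) : Prop :=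
  ¬ ∃ c : ℕ → AddSubgroup M, (∀ n, ℳ.IsGrSub (c n)) ∧ ∀ n, c n < c (n + 1)

/-- `M` is gr-artinian: there is no strictly decreasing infinite chain of graded
submodules. -/
def GrArtinian (ℳ : GModData Γ R M) : Prop :=
  ¬ ∃ c : ℕ → AddSubgroup M, (∀ n, ℳ.IsGrSub (c n)) ∧ ∀ n, c (n + 1) < c n

/-- The `R`-submodule of `M` generated by a set `X`. -/
def rClosure (ℳ : GModData Γ R M) (X : Set M) : AddSubgroup M :=
  sInf {N : AddSubgroup M | X ⊆ N ∧ ∀ m ∈ N, ∀ a : R, ℳ.smul m a ∈ N}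

/-- `M` is finitely generated (as a right `R`-module). -/
def FG (ℳ : GModData Γ R M) : Prop := ∃ s : Finset M, ℳ.rClosure ↑s = ⊤

/-- The submodule `N` of `M` is finitely generated. -/
def FGSub (ℳ : GModData Γ R M) (N : AddSubgroup M) : Prop :=
  ∃ s : Finset M, ↑s ⊆ (N : Set M) ∧ ℳ.rClosure ↑s = N

/-- `M` is finitely gr-cogenerated: every family of graded submodules with zero
intersection has a finite subfamily with zero intersection. -/
def FinGrCogenerated (ℳ : GModData Γ R M) : Prop :=
  ∀ S : Set (AddSubgroup M), (∀ N ∈ S, ℳ.IsGrSub N) → sInf S = ⊥ →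
    ∃ t : Finset (AddSubgroup M), ↑t ⊆ S ∧ t.inf id = ⊥

/-- The quotient module `M/N`, with grading `(M/N)_γ = (M_γ + N)/N`. -/
noncomputable def quot (ℳ : GModData Γ R M) (N : AddSubgroup M) :
    GModData Γ R (M ⧸ N) where
  smul x a := QuotientAddGroup.mk (ℳ.smul (Quotient.out x) a)
  component := fun γ => (ℳ.component γ).map (QuotientAddGroup.mk' N)

open scoped Classical in
/-- The submodule `N`, regarded as a `Γ`-graded right `R`-module. -/
noncomputable def restrict (ℳ : GModData Γ R M) (N : AddSubgroup M) :
    GModData Γ R ↥N where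
  smul m a := if h : ℳ.smul (↑m) a ∈ N then ⟨ℳ.smul (↑m) a, h⟩ else 0
  component := fun γ => (ℳ.component γ).addSubgroupOf N

/-- The subquotient module `P/N` (for `N ≤ P` graded submodules of `M`). -/
noncomputable def subquot (ℳ : GModData Γ R M) (N P : AddSubgroup M) :
    GModData Γ R (↥P ⧸ N.addSubgroupOf P) :=
  (ℳ.restrict P).quot (N.addSubgroupOf P)

/-- `M(e) = ⊕_{r(γ) = e} M_γ`, for `e ∈ Γ₀`. -/
def part (ℳ : GModData Γ R M) (e : Γ) : AddSubgroup M :=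
  ⨆ (f : Γ) (γ : f ⟶ e), ℳ.component γ

/-- `Γ'₀(M) = {e ∈ Γ₀ : M(e) ≠ 0}`. -/
def partSupport (ℳ : GModData Γ R M) : Set Γ := {e : Γ | ℳ.part e ≠ ⊥}

/-- `M` is `Γ₀`-noetherian: `M(e)` is gr-noetherian for every `e ∈ Γ₀`. -/
def G0Noetherian (ℳ : GModData Γ R M) : Prop :=
  ∀ e : Γ, (ℳ.restrict (ℳ.part e)).GrNoetherian

/-- `M` is `Γ₀`-artinian: `M(e)` is gr-artinian for every `e ∈ Γ₀`. -/
def G0Artinian (ℳ : GModData Γ R M) : Prop :=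
  ∀ e : Γ, (ℳ.restrict (ℳ.part e)).GrArtinian

/-- `M` is gr-simple: `M ≠ 0` and its only graded submodules are `0` and `M`. -/
def IsGrSimple (ℳ : GModData Γ R M) : Prop :=
  (⊤ : AddSubgroup M) ≠ ⊥ ∧ ∀ N : AddSubgroup M, ℳ.IsGrSub N → N = ⊥ ∨ N = ⊤

/-- `N` is a gr-simple graded submodule of `M`. -/
def IsGrSimpleSub (ℳ : GModData Γ R M) (N : AddSubgroup M) : Prop :=
  ℳ.IsGrSub N ∧ N ≠ ⊥ ∧
    ∀ L : AddSubgroup M, ℳ.IsGrSub L → L ≤ N → L = ⊥ ∨ L = N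

/-- `N` is a gr-maximal graded submodule of `M`. -/
def IsGrMaximalSub (ℳ : GModData Γ R M) (N : AddSubgroup M) : Prop :=
  ℳ.IsGrSub N ∧ N ≠ ⊤ ∧
    ∀ L : AddSubgroup M, ℳ.IsGrSub L → N ≤ L → L = N ∨ L = ⊤

/-- The graded Jacobson radical of `M`: the intersection of all gr-maximal graded
submodules of `M` (equal to `M` when there are none). -/
def grRad (ℳ : GModData Γ R M) : AddSubgroup M := sInf {N | ℳ.IsGrMaximalSub N}

/-- The gr-socle of `M`: the sum of all gr-simple graded submodules of `M`
(equal to `0` when there are none). -/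
def grSoc (ℳ : GModData Γ R M) : AddSubgroup M := sSup {N | ℳ.IsGrSimpleSub N}

/-- `N` is gr-superfluous in `M`. -/
def GrSuperfluous (ℳ : GModData Γ R M) (N : AddSubgroup M) : Prop :=
  ∀ X : AddSubgroup M, ℳ.IsGrSub X → N ⊔ X = ⊤ → X = ⊤

/-- `N` is gr-essential in `M`. -/
def GrEssential (ℳ : GModData Γ R M) (N : AddSubgroup M) : Prop :=
  ∀ X : AddSubgroup M, ℳ.IsGrSub X → N ⊓ X = ⊥ → X = ⊥

/-- `M` is gr-semisimple: the sum of all gr-simple graded submodules is `M`. -/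
def GrSemisimple (ℳ : GModData Γ R M) : Prop :=
  sSup {N : AddSubgroup M | ℳ.IsGrSimpleSub N} = ⊤

/-- `c 0 = 0 ⊆ c 1 ⊆ ⋯ ⊆ c n = M` is a gr-composition series of `M` of length `n`. -/
def IsGrCompSeries (ℳ : GModData Γ R M) (n : ℕ) (c : ℕ → AddSubgroup M) : Prop :=
  c 0 = ⊥ ∧ c n = ⊤ ∧ (∀ i, i ≤ n → ℳ.IsGrSub (c i)) ∧
  (∀ i, i < n → c i ≤ c (i + 1)) ∧
  ∀ i, i < n → (ℳ.subquot (c i) (c (i + 1))).IsGrSimple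

/-- `M` has finite gr-length: it admits a gr-composition series. -/
def FiniteGrLength (ℳ : GModData Γ R M) : Prop := ∃ n c, ℳ.IsGrCompSeries n c

/-- `g : M → M'` is a gr-homomorphism of graded right `R`-modules. -/
def IsGrHom (ℳ : GModData Γ R M) (𝒩 : GModData Γ R M') (g : M → M') : Prop :=
  (∀ m n : M, g (m + n) = g m + g n) ∧
  (∀ (m : M) (a : R), g (ℳ.smul m a) = 𝒩.smul (g m) a) ∧
  ∀ (e f : Γ) (σ : e ⟶ f), ∀ m ∈ ℳ.component σ, g m ∈ 𝒩.component σ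

/-- `M` and `M'` are gr-isomorphic (there is a bijective gr-homomorphism). -/
def GrIso (ℳ : GModData Γ R M) (𝒩 : GModData Γ R M') : Prop :=
  ∃ g : M → M', IsGrHom ℳ 𝒩 g ∧ Function.Bijective g

/-- `g : M → M'` is a homomorphism of degree `γ` (where `γ : e ⟶ f`, i.e.
`d(γ) = e`): `g(M_σ) ⊆ M'_{γσ}` when `γσ` is defined and `g(M_σ) = 0` otherwise. -/
def IsHomOfDeg (ℳ : GModData Γ R M) (𝒩 : GModData Γ R M') {e f : Γ} (γ : e ⟶ f)
    (g : M → M') : Prop :=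
  (∀ m n : M, g (m + n) = g m + g n) ∧
  (∀ (m : M) (a : R), g (ℳ.smul m a) = 𝒩.smul (g m) a) ∧
  (∀ (a : Γ) (σ : a ⟶ e), ∀ m ∈ ℳ.component σ, g m ∈ 𝒩.component (σ ≫ γ)) ∧
  (∀ (a b : Γ) (σ : a ⟶ b), b ≠ e → ∀ m ∈ ℳ.component σ, g m = 0)

/-- `MJ`: the submodule of `M` consisting of finite sums of elements `m a`,
`m ∈ M`, `a ∈ J`. -/
def smulSet [AddCommGroup R] (ℳ : GModData Γ R M) (J : AddSubgroup R) : AddSubgroup M :=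
  AddSubgroup.closure {x : M | ∃ (m : M) (a : R), a ∈ J ∧ x = ℳ.smul m a}

open scoped Classical in
/-- The direct sum `⊕_{j ∈ J} M_j` of graded right modules, with grading
`(⊕_j M_j)_γ = ⊕_j (M_j)_γ`. -/
noncomputable def dsum {J : Type u} {Mf : J → Type u} [∀ j, AddCommGroup (Mf j)]
    (df : ∀ j, GModData Γ R (Mf j)) : GModData Γ R (Π₀ j, Mf j) where
  smul m a :=
    if h : ∃ y : Π₀ j, Mf j, ∀ j, y j = (df j).smul (m j) a then h.choose else 0
  component := fun γ => ⨅ j : J, ((df j).component γ).comap (DFinsupp.evalAddMonoidHom j)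

/-- A descending chain of graded submodules is tight if
`Γ'₀(M_i/M_{i+1}) ⊇ Γ'₀(M_{i+1}/M_{i+2})` for all `i`. -/
def TightDesc (ℳ : GModData Γ R M) (c : ℕ → AddSubgroup M) : Prop :=
  (∀ i, ℳ.IsGrSub (c i)) ∧ (∀ i, c (i + 1) ≤ c i) ∧
  ∀ i, (ℳ.subquot (c (i + 2)) (c (i + 1))).partSupport ⊆
    (ℳ.subquot (c (i + 1)) (c i)).partSupport

/-- An ascending chain of graded submodules is tight if
`Γ'₀(M_{i+1}/M_i) ⊇ Γ'₀(M_{i+2}/M_{i+1})` for all `i`. -/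
def TightAsc (ℳ : GModData Γ R M) (c : ℕ → AddSubgroup M) : Prop :=
  (∀ i, ℳ.IsGrSub (c i)) ∧ (∀ i, c i ≤ c (i + 1)) ∧
  ∀ i, (ℳ.subquot (c (i + 1)) (c (i + 2))).partSupport ⊆
    (ℳ.subquot (c i) (c (i + 1))).partSupport

/-- `M` is strongly `Γ₀`-artinian: every tight descending chain of graded
submodules stabilizes. -/
def StronglyG0Artinian (ℳ : GModData Γ R M) : Prop :=
  ∀ c : ℕ → AddSubgroup M, ℳ.TightDesc c → ∃ n, ∀ m, n ≤ m → c m = c n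

/-- `M` is strongly `Γ₀`-noetherian: every tight ascending chain of graded
submodules stabilizes. -/
def StronglyG0Noetherian (ℳ : GModData Γ R M) : Prop :=
  ∀ c : ℕ → AddSubgroup M, ℳ.TightAsc c → ∃ n, ∀ m, n ≤ m → c m = c n

end GModData

/-- `E` is a gr-injective graded right `R`-module: for all graded right `R`-modules
`M`, `N`, every injective gr-homomorphism `g : N → M` and every gr-homomorphism
`h : N → E`, there is a gr-homomorphism `h' : M → E` with `h' ∘ g = h`. -/
def GrInjective {R : Type u} [AddCommGroup R] (𝒜 : GRingData Γ R) {E : Type u}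
    [AddCommGroup E] (ℰ : GModData Γ R E) : Prop :=
  ∀ (M N : Type u) [AddCommGroup M] [AddCommGroup N]
    (ℳ : GModData Γ R M) (𝒩 : GModData Γ R N),
    ℳ.IsGraded 𝒜 → 𝒩.IsGraded 𝒜 →
    ∀ g : N → M, GModData.IsGrHom 𝒩 ℳ g → Function.Injective g →
    ∀ h : N → E, GModData.IsGrHom 𝒩 ℰ h →
    ∃ h' : M → E, GModData.IsGrHom ℳ ℰ h' ∧ ∀ y : N, h' (g y) = h y

/-- A bundled `Γ`-graded right module over the graded ring `𝒜`. -/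
structure GrModule (Γ : Type u) [Groupoid.{u} Γ] {R : Type u} [AddCommGroup R]
    (𝒜 : GRingData Γ R) : Type (u + 1) where
  carrier : Type u
  [addCommGroup : AddCommGroup carrier]
  data : GModData Γ R carrier
  graded : data.IsGraded 𝒜

attribute [instance] GrModule.addCommGroup

namespace GRingData

variable {R : Type u} [AddCommGroup R]

/-- `R` is right `Γ₀`-noetherian. -/
def RightG0Noetherian (𝒜 : GRingData Γ R) : Prop := 𝒜.toMod.G0Noetherian

/-- `R` is right `Γ₀`-artinian. -/
def RightG0Artinian (𝒜 : GRingData Γ R) : Prop := 𝒜.toMod.G0Artinian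

/-- The principal right ideal `aR`. -/
def principal (𝒜 : GRingData Γ R) (a : R) : AddSubgroup R :=
  AddSubgroup.closure {x : R | ∃ b : R, x = 𝒜.mul a b}

/-- A gr-principal graded right ideal: one of the form `aR` with `a` homogeneous. -/
def IsGrPrincipal (𝒜 : GRingData Γ R) (N : AddSubgroup R) : Prop :=
  ∃ a : R, 𝒜.toMod.IsHomogeneous a ∧ N = 𝒜.principal a

/-- `N` is a graded left ideal of `R`, i.e. a graded submodule of `_R R`. -/
def IsGrLeftIdeal (𝒜 : GRingData Γ R) (N : AddSubgroup R) : Prop :=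
  (∀ m ∈ N, ∀ a : R, 𝒜.mul a m ∈ N) ∧
  ∀ n ∈ N, n ∈ AddSubgroup.closure {x : R | x ∈ N ∧ 𝒜.toMod.IsHomogeneous x}

/-- `N` is a gr-maximal graded left ideal of `R`. -/
def IsGrMaxLeftIdeal (𝒜 : GRingData Γ R) (N : AddSubgroup R) : Prop :=
  𝒜.IsGrLeftIdeal N ∧ N ≠ ⊤ ∧
    ∀ L : AddSubgroup R, 𝒜.IsGrLeftIdeal L → N ≤ L → L = N ∨ L = ⊤

/-- The graded Jacobson radical of `R` as a left module over itself:
the intersection of all gr-maximal graded left ideals. -/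
def lRad (𝒜 : GRingData Γ R) : AddSubgroup R := sInf {N | 𝒜.IsGrMaxLeftIdeal N}

/-- `N` is a graded (two-sided) ideal of `R`. -/
def IsGrIdeal (𝒜 : GRingData Γ R) (N : AddSubgroup R) : Prop :=
  𝒜.toMod.IsGrSub N ∧ ∀ m ∈ N, ∀ a : R, 𝒜.mul a m ∈ N

/-- `N ⊆ R_e` is a left ideal of the unital ring `R_e`. -/
def IsLeftIdealIn (𝒜 : GRingData Γ R) (e : Γ) (N : Set R) : Prop :=
  N ⊆ (𝒜.component (𝟙 e) : Set R) ∧ (0 : R) ∈ N ∧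
  (∀ a ∈ N, ∀ b ∈ N, a - b ∈ N) ∧
  ∀ r ∈ 𝒜.component (𝟙 e), ∀ a ∈ N, 𝒜.mul r a ∈ N

/-- `N` is a maximal left ideal of the unital ring `R_e`. -/
def IsMaxLeftIdealIn (𝒜 : GRingData Γ R) (e : Γ) (N : Set R) : Prop :=
  𝒜.IsLeftIdealIn e N ∧ N ≠ (𝒜.component (𝟙 e) : Set R) ∧
  ∀ L : Set R, 𝒜.IsLeftIdealIn e L → N ⊆ L →
    L = N ∨ L = (𝒜.component (𝟙 e) : Set R)

/-- The Jacobson radical `rad(R_e)` of the unital ring `R_e`, as a subset of `R`: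
the intersection of all maximal left ideals of `R_e`. -/
def radIn (𝒜 : GRingData Γ R) (e : Γ) : Set R :=
  (𝒜.component (𝟙 e) : Set R) ∩ ⋂₀ {N : Set R | 𝒜.IsMaxLeftIdealIn e N}

/-- The quotient graded ring `R/I` of `R` by a graded ideal `I`. -/
noncomputable def quotRing (𝒜 : GRingData Γ R) (I : AddSubgroup R) :
    GRingData Γ (R ⧸ I) where
  mul x y := QuotientAddGroup.mk (𝒜.mul (Quotient.out x) (Quotient.out y))
  component := fun γ => (𝒜.component γ).map (QuotientAddGroup.mk' I)
  one e := QuotientAddGroup.mk (𝒜.one e)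

/-- `R` is a gr-semisimple ring. -/
def GrSemisimpleRing (𝒜 : GRingData Γ R) : Prop := 𝒜.toMod.GrSemisimple

/-- `R` is gr-semilocal: the `Γ`-graded ring `R/rad^gr(R)` is gr-semisimple. -/
noncomputable def GrSemilocal (𝒜 : GRingData Γ R) : Prop :=
  ((𝒜.quotRing 𝒜.toMod.grRad).GrSemisimpleRing)

end GRingData

/-!
Everything runs through regrading: for `γ : e ⟶ f`, regrading a module `M` along the bijection
`GrIdx.shift γ` of the morphisms of `Γ` turns homomorphisms of degree `γ` out of `M` into
gr-homomorphisms out of the regraded module.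

If `E` is gr-injective, a map `h : U → E` of degree `γ` is thus a gr-homomorphism out of the
regraded `U`, and extends along `U ⊆ R` to a gr-homomorphism `g` out of the regraded `R`. Then
`r ↦ g (1_e r)` has degree `γ` and still extends `h`, because left multiplication by `1_e` is the
projection onto the components of `R` ending at `e`, and `h` kills the others.

Conversely, Zorn's lemma gives a maximal partial gr-homomorphism `φ : M ⇀ E` extending
`h ∘ g⁻¹`. For `x ∈ M_σ`, the map `r ↦ x r` has degree `σ`, so Baer's condition applied to the
graded right ideal `{r | x r ∈ dom φ}` and to `r ↦ φ (x r)` extends `φ` to `dom φ + x R`;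
by maximality `φ` is therefore defined on every homogeneous element, hence everywhere.
-/

namespace GModData

variable {R M N E : Type u} [AddCommGroup M] [AddCommGroup N] [AddCommGroup E]
  {ℳ : GModData Γ R M} {𝒩 : GModData Γ R N} {ℰ : GModData Γ R E}

def IsGrHom.toAddMonoidHom {g : N → M} (hg : IsGrHom 𝒩 ℳ g) : N →+ M :=
  AddMonoidHom.mk' g hg.1

@[simp]
theorem IsGrHom.toAddMonoidHom_apply {g : N → M} (hg : IsGrHom 𝒩 ℳ g) (n : N) :
    hg.toAddMonoidHom n = g n := rfl

theorem restrict_smul {P : AddSubgroup M} (hP : ∀ m ∈ P, ∀ a : R, ℳ.smul m a ∈ P)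
    (m : P) (a : R) : (ℳ.restrict P).smul m a = ⟨ℳ.smul m a, hP m m.2 a⟩ :=
  dif_pos _

theorem isGrHom_restrict_subtype {P : AddSubgroup M}
    (hP : ∀ m ∈ P, ∀ a : R, ℳ.smul m a ∈ P) :
    IsGrHom (ℳ.restrict P) ℳ (Subtype.val : P → M) :=
  ⟨fun _ _ => rfl, fun m a => congrArg Subtype.val (restrict_smul hP m a),
    fun _ _ _ _ hm => hm⟩

theorem IsGrSub.exists_finsupp {P : AddSubgroup M} (hP : ℳ.IsGrSub P) {x : M}
    (hx : x ∈ P) : ∃ d : GrIdx Γ →₀ M,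
      (∀ γ, d γ ∈ ℳ.component γ.2.2 ⊓ P) ∧ (d.sum fun _ m => m) = x := by
  have : x ∈ ⨆ γ : GrIdx Γ, (ℳ.component γ.2.2 ⊓ P).toIntSubmodule := by
    refine (AddSubgroup.closure_le (K := (⨆ γ : GrIdx Γ,
      (ℳ.component γ.2.2 ⊓ P).toIntSubmodule).toAddSubgroup)).2 ?_ (hP.2 x hx)
    rintro m ⟨hmP, e, f, σ, hm⟩
    exact Submodule.mem_iSup_of_mem ⟨e, f, σ⟩ ⟨hm, hmP⟩
  exact (Submodule.mem_iSup_iff_exists_finsupp _ x).1 this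

theorem IsGrSub.addMonoidHom_ext {P : AddSubgroup M} (hP : ℳ.IsGrSub P) {F G : P →+ E}
    (h : ∀ x : P, ℳ.IsHomogeneous x → F x = G x) : F = G := by
  ext ⟨x, hx⟩
  have : x ∈ (F.eqLocus G).map P.subtype := by
    refine AddSubgroup.closure_le _ |>.2 ?_ (hP.2 x hx)
    rintro y ⟨hyP, hy⟩
    exact ⟨⟨y, hyP⟩, h _ hy, rfl⟩
  obtain ⟨u, hu, rfl⟩ := this
  exact hu

variable [AddCommGroup R] {𝒜 : GRingData Γ R}

theorem IsGraded.apply_eq_of_sum_eq (hℳ : ℳ.IsGraded 𝒜) {s : Finset (GrIdx Γ)}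
    {c : GrIdx Γ → M} (hc : ∀ γ ∈ s, c γ ∈ ℳ.component γ.2.2) {d : GrIdx Γ →₀ M}
    (hd : ∀ γ, d γ ∈ ℳ.component γ.2.2) (h : ∑ γ ∈ s, c γ = d.sum fun _ m => m) :
    ∀ γ ∈ s, c γ = d γ := by
  classical
  have hsum : ∑ γ ∈ s ∪ d.support, ((if γ ∈ s then c γ else 0) - d γ) = 0 := by
    rw [Finset.sum_sub_distrib, Finset.sum_ite_mem, Finset.union_inter_cancel_left, h,
      Finsupp.sum_of_support_subset d Finset.subset_union_right _ fun _ _ => rfl, sub_self]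
  have hmem : ∀ γ ∈ s ∪ d.support,
      (if γ ∈ s then c γ else 0) - d γ ∈ ℳ.component γ.2.2 := fun γ _ =>
    sub_mem (by split_ifs with hγ; exacts [hc γ hγ, zero_mem _]) (hd γ)
  intro γ hγ
  simpa [hγ, sub_eq_zero] using
    hℳ.independent _ _ hmem hsum γ (Finset.mem_union_left _ hγ)

theorem IsGraded.eq_top_of_component_le (hℳ : ℳ.IsGraded 𝒜) {P : AddSubgroup M}
    (h : ∀ δ : GrIdx Γ, ℳ.component δ.2.2 ≤ P) : P = ⊤ := by
  refine eq_top_iff.2 fun m _ => ?_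
  obtain ⟨s, c, hc, rfl⟩ := hℳ.decompose m
  exact sum_mem fun γ hγ => h γ (hc γ hγ)

theorem IsGrSub.mem_of_sum_mem {P : AddSubgroup M} (hP : ℳ.IsGrSub P)
    (hℳ : ℳ.IsGraded 𝒜) {s : Finset (GrIdx Γ)} {c : GrIdx Γ → M}
    (hc : ∀ γ ∈ s, c γ ∈ ℳ.component γ.2.2) (hs : ∑ γ ∈ s, c γ ∈ P) :
    ∀ γ ∈ s, c γ ∈ P := by
  obtain ⟨d, hd, hsum⟩ := hP.exists_finsupp hs
  intro γ hγ
  rw [hℳ.apply_eq_of_sum_eq hc (fun γ => (hd γ).1) hsum.symm γ hγ]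
  exact (hd γ).2

theorem IsGrSub.comap {P : AddSubgroup M} (hP : ℳ.IsGrSub P) (h𝒩 : 𝒩.IsGraded 𝒜)
    (hℳ : ℳ.IsGraded 𝒜) {g : N → M} (hg : IsGrHom 𝒩 ℳ g) :
    𝒩.IsGrSub (P.comap hg.toAddMonoidHom) := by
  refine ⟨fun n hn a => ?_, fun n hn => ?_⟩
  · change g (𝒩.smul n a) ∈ P
    rw [hg.2.1]
    exact hP.1 _ hn a
  · obtain ⟨s, c, hc, rfl⟩ := h𝒩.decompose n
    have hgc : ∀ γ ∈ s, g (c γ) ∈ ℳ.component γ.2.2 := fun γ hγ => hg.2.2 _ _ _ _ (hc γ hγ)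
    have hcP := hP.mem_of_sum_mem hℳ hgc (by simpa [map_sum] using hn)
    exact sum_mem fun γ hγ => AddSubgroup.subset_closure ⟨hcP γ hγ, _, _, _, hc γ hγ⟩

theorem IsGraded.restrict (hℳ : ℳ.IsGraded 𝒜) {P : AddSubgroup M} (hP : ℳ.IsGrSub P) :
    (ℳ.restrict P).IsGraded 𝒜 := by
  have hs := restrict_smul hP.1
  refine ⟨?_, ?_, ?_, ?_, ?_, ?_, ?_, ?_⟩
  · intro m n a
    simpa [hs, Subtype.ext_iff] using hℳ.add_smul m n a
  · intro m a b
    simpa [hs, Subtype.ext_iff] using hℳ.smul_add m a b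
  · intro m a b
    simpa [hs, Subtype.ext_iff] using hℳ.smul_mul m a b
  · intro x
    obtain ⟨d, hd, hsum⟩ := hP.exists_finsupp x.2
    refine ⟨d.support, fun γ => ⟨d γ, (hd γ).2⟩, fun γ _ => (hd γ).1, ?_⟩
    ext
    simpa [Finsupp.sum] using hsum.symm
  · intro s c hc hsum γ hγ
    exact Subtype.ext <| hℳ.independent s (fun γ => c γ) hc
      (by simpa using congrArg Subtype.val hsum) γ hγ
  · intro _ _ _ σ τ m a hm ha
    rw [hs]
    exact hℳ.smul_mem σ τ hm ha
  · intro _ _ _ _ σ τ m a hne hm ha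
    rw [hs]
    exact Subtype.ext (hℳ.smul_eq_zero σ τ hne hm ha)
  · intro _ _ σ m hm
    rw [hs]
    exact Subtype.ext (hℳ.smul_one σ hm)

theorem IsGraded.isHomOfDeg_smul (hℳ : ℳ.IsGraded 𝒜) {a b : Γ} {σ : a ⟶ b} {x : M}
    (hx : x ∈ ℳ.component σ) : IsHomOfDeg 𝒜.toMod ℳ σ (ℳ.smul x) :=
  ⟨hℳ.smul_add x, hℳ.smul_mul x, fun _ τ _ hr => hℳ.smul_mem σ τ hx hr,
    fun _ _ τ hb _ hr => hℳ.smul_eq_zero σ τ hb hx hr⟩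

end GModData

namespace GrIdx

variable {e f : Γ}

open scoped Classical in
/-- A bijection of `GrIdx Γ` commuting with precomposition, so that regrading along it keeps a
module graded. -/
noncomputable def shift (γ : e ⟶ f) (δ : GrIdx Γ) : GrIdx Γ :=
  if h : δ.2.1 = f then ⟨δ.1, e, (δ.2.2 ≫ eqToHom h) ≫ Groupoid.inv γ⟩
  else if h' : δ.2.1 = e then ⟨δ.1, f, (δ.2.2 ≫ eqToHom h') ≫ γ⟩
  else δ

theorem shift_of_cod_eq_target (γ : e ⟶ f) {a : Γ} (σ : a ⟶ f) :
    shift γ ⟨a, f, σ⟩ = ⟨a, e, σ ≫ Groupoid.inv γ⟩ := by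
  simp [shift]

theorem shift_of_cod_eq_source (γ : e ⟶ f) (hef : e ≠ f) {a : Γ} (σ : a ⟶ e) :
    shift γ ⟨a, e, σ⟩ = ⟨a, f, σ ≫ γ⟩ := by
  simp [shift, hef]

theorem shift_of_cod_ne (γ : e ⟶ f) {a b : Γ} (hf : b ≠ f) (he : b ≠ e) (σ : a ⟶ b) :
    shift γ ⟨a, b, σ⟩ = ⟨a, b, σ⟩ := by
  simp [shift, hf, he]

theorem shift_comp_of_cod_eq_source (γ : e ⟶ f) {a : Γ} (σ : a ⟶ e) :
    shift γ ⟨a, f, σ ≫ γ⟩ = ⟨a, e, σ⟩ := by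
  simp [shift_of_cod_eq_target]

theorem shift_inv_shift (γ : e ⟶ f) (δ : GrIdx Γ) : shift (Groupoid.inv γ) (shift γ δ) = δ := by
  obtain ⟨a, b, σ⟩ := δ
  by_cases hf : b = f
  · subst hf
    rw [shift_of_cod_eq_target, shift_of_cod_eq_target]
    simp
  by_cases he : b = e
  · subst he
    rw [shift_of_cod_eq_source γ hf, shift_of_cod_eq_source _ (Ne.symm hf)]
    simp
  rw [shift_of_cod_ne γ hf he, shift_of_cod_ne _ he hf]

noncomputable def shiftEquiv (γ : e ⟶ f) : GrIdx Γ ≃ GrIdx Γ where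
  toFun := shift γ
  invFun := shift (Groupoid.inv γ)
  left_inv := shift_inv_shift γ
  right_inv δ := by simpa using shift_inv_shift (Groupoid.inv γ) δ

end GrIdx

namespace GModData

variable {R M N E : Type u} [AddCommGroup M] [AddCommGroup N] [AddCommGroup E]
  {ℳ : GModData Γ R M} {𝒩 : GModData Γ R N} {ℰ : GModData Γ R E} {e f : Γ}

noncomputable def shift (ℳ : GModData Γ R M) (γ : e ⟶ f) : GModData Γ R M where
  smul := ℳ.smul
  component τ := ℳ.component (GrIdx.shift γ ⟨_, _, τ⟩).2.2

theorem shift_component (γ : e ⟶ f) (δ : GrIdx Γ) :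
    (ℳ.shift γ).component δ.2.2 = ℳ.component (GrIdx.shiftEquiv γ δ).2.2 := rfl

theorem exists_mem_of_mem_shift {γ : e ⟶ f} {a b : Γ} {σ : a ⟶ b} {m : M}
    (hm : m ∈ (ℳ.shift γ).component σ) : ∃ (b' : Γ) (σ' : a ⟶ b'), m ∈ ℳ.component σ' := by
  change m ∈ ℳ.component (GrIdx.shift γ ⟨a, b, σ⟩).2.2 at hm
  by_cases hf : b = f
  · subst hf
    rw [GrIdx.shift_of_cod_eq_target] at hm
    exact ⟨_, _, hm⟩
  by_cases he : b = e
  · subst he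
    rw [GrIdx.shift_of_cod_eq_source γ hf] at hm
    exact ⟨_, _, hm⟩
  rw [GrIdx.shift_of_cod_ne γ hf he] at hm
  exact ⟨_, _, hm⟩

theorem isHomogeneous_shift (γ : e ⟶ f) (m : M) :
    (ℳ.shift γ).IsHomogeneous m ↔ ℳ.IsHomogeneous m := by
  constructor
  · rintro ⟨a, b, σ, hm⟩
    exact ⟨_, _, _, hm⟩
  · rintro ⟨a, b, σ, hm⟩
    refine ⟨_, _, ((GrIdx.shiftEquiv γ).symm ⟨a, b, σ⟩).2.2, ?_⟩
    rwa [shift_component, Equiv.apply_symm_apply]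

theorem isGrSub_shift_iff (γ : e ⟶ f) {P : AddSubgroup M} :
    (ℳ.shift γ).IsGrSub P ↔ ℳ.IsGrSub P := by
  simp only [IsGrSub, isHomogeneous_shift]
  rfl

theorem IsGrHom.shift {g : N → M} (hg : IsGrHom 𝒩 ℳ g) (γ : e ⟶ f) :
    IsGrHom (𝒩.shift γ) (ℳ.shift γ) g :=
  ⟨hg.1, hg.2.1, fun _ _ _ m hm => hg.2.2 _ _ _ m hm⟩

theorem IsHomOfDeg.isGrHom_shift {γ : e ⟶ f} {g : M → E} (hg : IsHomOfDeg ℳ ℰ γ g) :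
    IsGrHom (ℳ.shift γ) ℰ g := by
  refine ⟨hg.1, hg.2.1, fun a b σ m hm => ?_⟩
  change m ∈ ℳ.component (GrIdx.shift γ ⟨a, b, σ⟩).2.2 at hm
  by_cases hf : b = f
  · subst hf
    rw [GrIdx.shift_of_cod_eq_target] at hm
    simpa using hg.2.2.1 a _ m hm
  have hne : (GrIdx.shift γ ⟨a, b, σ⟩).2.1 ≠ e := by
    by_cases he : b = e
    · subst he
      rw [GrIdx.shift_of_cod_eq_source γ hf]
      exact Ne.symm hf
    · rwa [GrIdx.shift_of_cod_ne γ hf he]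
  rw [hg.2.2.2 _ _ _ hne m hm]
  exact zero_mem _

variable [AddCommGroup R] {𝒜 : GRingData Γ R}

theorem IsGraded.shift (hℳ : ℳ.IsGraded 𝒜) (γ : e ⟶ f) : (ℳ.shift γ).IsGraded 𝒜 := by
  refine ⟨hℳ.add_smul, hℳ.smul_add, hℳ.smul_mul, fun x => ?_, fun s c hc hsum => ?_,
    ?_, fun σ τ m a hne hm ha => ?_, fun σ m hm => ?_⟩
  · obtain ⟨s, c, hc, rfl⟩ := hℳ.decompose x
    refine ⟨s.map (GrIdx.shiftEquiv γ).symm.toEmbedding, fun δ => c (GrIdx.shiftEquiv γ δ),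
      fun δ hδ => ?_, by simp⟩
    obtain ⟨δ₀, hδ₀, rfl⟩ := Finset.mem_map.1 hδ
    beta_reduce
    rw [Equiv.coe_toEmbedding, shift_component, Equiv.apply_symm_apply]
    exact hc δ₀ hδ₀
  · intro δ hδ
    have key := hℳ.independent (s.map (GrIdx.shiftEquiv γ).toEmbedding)
      (fun δ => c ((GrIdx.shiftEquiv γ).symm δ)) (fun δ hδ => ?_) (by simpa using hsum)
    · simpa using key _ (Finset.mem_map_of_mem _ hδ)
    · obtain ⟨δ₀, hδ₀, rfl⟩ := Finset.mem_map.1 hδ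
      rw [Equiv.coe_toEmbedding, Equiv.symm_apply_apply, ← shift_component]
      exact hc δ₀ hδ₀
  · intro _ b _ σ τ m a hm ha
    change m ∈ ℳ.component (GrIdx.shift γ ⟨_, _, σ⟩).2.2 at hm
    change ℳ.smul m a ∈ ℳ.component (GrIdx.shift γ ⟨_, _, τ ≫ σ⟩).2.2
    by_cases hf : b = f
    · subst hf
      rw [GrIdx.shift_of_cod_eq_target] at hm ⊢
      simpa using hℳ.smul_mem _ τ hm ha
    by_cases he : b = e
    · subst he
      rw [GrIdx.shift_of_cod_eq_source γ hf] at hm ⊢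
      simpa using hℳ.smul_mem _ τ hm ha
    rw [GrIdx.shift_of_cod_ne γ hf he] at hm ⊢
    exact hℳ.smul_mem _ τ hm ha
  · obtain ⟨_, σ', hm'⟩ := exists_mem_of_mem_shift hm
    exact hℳ.smul_eq_zero σ' τ hne hm' ha
  · obtain ⟨_, σ', hm'⟩ := exists_mem_of_mem_shift hm
    exact hℳ.smul_one σ' hm'

end GModData

namespace GRingData.IsObjectUnital

open GModData

variable {R E : Type u} [AddCommGroup R] [AddCommGroup E] {𝒜 : GRingData Γ R}
  {ℰ : GModData Γ R E} {e f : Γ}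

theorem toMod_isGraded (h𝒜 : 𝒜.IsObjectUnital) : 𝒜.toMod.IsGraded 𝒜 :=
  ⟨h𝒜.right_distrib, h𝒜.left_distrib, fun m a b => (h𝒜.mul_assoc m a b).symm,
    h𝒜.decompose, h𝒜.independent, fun σ τ _ _ hm ha => h𝒜.mul_mem σ τ hm ha,
    fun σ τ _ _ hne hm ha => h𝒜.mul_eq_zero σ τ hne hm ha, fun σ _ hm => h𝒜.mul_one σ hm⟩

/-- The projection of `R` onto `⊕_{r(σ) = e} R_σ`. -/
def mulLeftOne (h𝒜 : 𝒜.IsObjectUnital) (e : Γ) : R →+ R :=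
  AddMonoidHom.mk' (𝒜.mul (𝒜.one e)) (h𝒜.left_distrib _)

@[simp]
theorem mulLeftOne_apply (h𝒜 : 𝒜.IsObjectUnital) (e : Γ) (x : R) :
    h𝒜.mulLeftOne e x = 𝒜.mul (𝒜.one e) x := rfl

theorem mulLeftOne_mem (h𝒜 : 𝒜.IsObjectUnital) {U : AddSubgroup R}
    (hU : 𝒜.toMod.IsGrSub U) (e : Γ) {x : R} (hx : x ∈ U) : h𝒜.mulLeftOne e x ∈ U := by
  change x ∈ U.comap (h𝒜.mulLeftOne e)
  refine AddSubgroup.closure_le _ |>.2 ?_ (hU.2 x hx)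
  rintro y ⟨hyU, a, b, σ, hy⟩
  change 𝒜.mul _ y ∈ U
  by_cases hb : b = e
  · subst hb
    rwa [h𝒜.one_mul σ hy]
  · rw [h𝒜.mul_eq_zero (𝟙 e) σ hb (h𝒜.one_mem e) hy]
    exact zero_mem _

theorem _root_.GModData.IsHomOfDeg.apply_mulLeftOne (h𝒜 : 𝒜.IsObjectUnital)
    {U : AddSubgroup R} (hU : 𝒜.toMod.IsGrSub U) {γ : e ⟶ f} {h : U → E}
    (hh : IsHomOfDeg (𝒜.toMod.restrict U) ℰ γ h) (x : U) :
    h ⟨h𝒜.mulLeftOne e x, h𝒜.mulLeftOne_mem hU e x.2⟩ = h x := by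
  let H : U →+ E := AddMonoidHom.mk' h hh.1
  let P : U →+ U := ((h𝒜.mulLeftOne e).comp U.subtype).codRestrict U
    fun x => h𝒜.mulLeftOne_mem hU e x.2
  refine DFunLike.congr_fun (hU.addMonoidHom_ext (F := H.comp P) (G := H) ?_) x
  rintro ⟨y, hyU⟩ ⟨a, b, σ, hy⟩
  by_cases hb : b = e
  · subst hb
    simp [H, P, h𝒜.one_mul σ hy]
  · have hy0 : h ⟨y, hyU⟩ = 0 := hh.2.2.2 a b σ hb _ hy
    simp [H, P, h𝒜.mul_eq_zero (𝟙 e) σ hb (h𝒜.one_mem e) hy, hy0]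
    exact H.map_zero

theorem isHomOfDeg_comp_mulLeftOne (h𝒜 : 𝒜.IsObjectUnital) {γ : e ⟶ f} {g : R → E}
    (hg : IsGrHom (𝒜.toMod.shift γ) ℰ g) :
    IsHomOfDeg 𝒜.toMod ℰ γ (fun r => g (h𝒜.mulLeftOne e r)) := by
  refine ⟨fun m n => ?_, fun m a => ?_, fun a σ m hm => ?_, fun a b σ hb m hm => ?_⟩
  · simp only [map_add]
    exact hg.1 _ _
  · change g (𝒜.mul _ (𝒜.mul m a)) = ℰ.smul (g (𝒜.mul _ m)) a
    rw [← h𝒜.mul_assoc]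
    exact hg.2.1 _ a
  · simp only [mulLeftOne_apply, h𝒜.one_mul σ hm]
    apply hg.2.2
    change m ∈ 𝒜.component (GrIdx.shift γ ⟨a, f, σ ≫ γ⟩).2.2
    rwa [GrIdx.shift_comp_of_cod_eq_source]
  · simp only [mulLeftOne_apply, h𝒜.mul_eq_zero (𝟙 e) σ hb (h𝒜.one_mem e) hm]
    exact hg.toAddMonoidHom.map_zero

end GRingData.IsObjectUnital

section GrBaer

open GModData

variable {R E : Type u} [AddCommGroup R] [AddCommGroup E]

def GrBaerCriterion (𝒜 : GRingData Γ R) (ℰ : GModData Γ R E) : Prop :=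
  ∀ U : AddSubgroup R, 𝒜.toMod.IsGrSub U →
    ∀ (e f : Γ) (γ : e ⟶ f) (h : ↥U → E),
      IsHomOfDeg (𝒜.toMod.restrict U) ℰ γ h →
      ∃ h' : R → E, IsHomOfDeg 𝒜.toMod ℰ γ h' ∧ ∀ x : ↥U, h' ↑x = h x

variable {𝒜 : GRingData Γ R} {ℰ : GModData Γ R E}

theorem GrInjective.grBaerCriterion (hinj : GrInjective 𝒜 ℰ) (h𝒜 : 𝒜.IsObjectUnital) :
    GrBaerCriterion 𝒜 ℰ := by
  intro U hU e f γ h hh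
  have hR := h𝒜.toMod_isGraded
  obtain ⟨g, hg, hgh⟩ := hinj R U (𝒜.toMod.shift γ) ((𝒜.toMod.restrict U).shift γ)
    (hR.shift γ) ((hR.restrict hU).shift γ) Subtype.val
    ((isGrHom_restrict_subtype hU.1).shift γ) Subtype.val_injective h hh.isGrHom_shift
  exact ⟨_, h𝒜.isHomOfDeg_comp_mulLeftOne hg,
    fun x => (hgh _).trans (hh.apply_mulLeftOne h𝒜 hU x)⟩

end GrBaer

namespace GModData

variable {R M N E : Type u} [AddCommGroup M] [AddCommGroup N] [AddCommGroup E]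
  {ℳ : GModData Γ R M} {𝒩 : GModData Γ R N} {ℰ : GModData Γ R E}

def componentLocus (ℳ : GModData Γ R M) (ℰ : GModData Γ R E) (φ : M →ₗ.[ℤ] E)
    (δ : GrIdx Γ) : Submodule ℤ M :=
  (ℳ.component δ.2.2).toIntSubmodule ⊓
    ((ℰ.component δ.2.2).toIntSubmodule.comap φ.toFun).map φ.domain.subtype

theorem mem_componentLocus {φ : M →ₗ.[ℤ] E} {δ : GrIdx Γ} {m : M} :
    m ∈ componentLocus ℳ ℰ φ δ ↔
      m ∈ ℳ.component δ.2.2 ∧ ∃ h : m ∈ φ.domain, φ ⟨m, h⟩ ∈ ℰ.component δ.2.2 := by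
  simp [componentLocus, ← SetLike.mem_coe, AddSubgroup.coe_toIntSubmodule]

theorem componentLocus_mono {φ φ' : M →ₗ.[ℤ] E} (h : φ ≤ φ') (δ : GrIdx Γ) :
    componentLocus ℳ ℰ φ δ ≤ componentLocus ℳ ℰ φ' δ := by
  intro m hm
  obtain ⟨hm, hmφ, hφm⟩ := mem_componentLocus.1 hm
  exact mem_componentLocus.2
    ⟨hm, h.1 hmφ, by rwa [← h.2 (x := ⟨m, hmφ⟩) (y := ⟨m, h.1 hmφ⟩) rfl]⟩

/-- Gradedness of a partial map is encoded as "the domain is spanned by homogeneous elements at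
which `φ` respects the grading": this passes to `sup` and `sSup` for free and implies `map_mem`. -/
structure IsPartialGrHom (ℳ : GModData Γ R M) (ℰ : GModData Γ R E) (φ : M →ₗ.[ℤ] E) :
    Prop where
  smul_mem : ∀ m ∈ φ.domain, ∀ a : R, ℳ.smul m a ∈ φ.domain
  map_smul : ∀ (m : φ.domain) (a : R) (h : ℳ.smul m a ∈ φ.domain),
    φ ⟨_, h⟩ = ℰ.smul (φ m) a
  domain_le_iSup : φ.domain ≤ ⨆ δ, componentLocus ℳ ℰ φ δ

/-- The partial map `L n ↦ ψ n` on the range of `L` (junk unless `ker L ≤ ker ψ`). -/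
noncomputable def liftPMap (L : N →+ M) (ψ : N →+ E) : M →ₗ.[ℤ] E :=
  (LinearMap.range (L.toIntLinearMap.prod ψ.toIntLinearMap)).toLinearPMap

theorem mem_liftPMap_domain (L : N →+ M) (ψ : N →+ E) (n : N) :
    L n ∈ (liftPMap L ψ).domain :=
  Submodule.mem_map.2 ⟨(L n, ψ n), ⟨n, rfl⟩, rfl⟩

theorem exists_of_mem_liftPMap_domain {L : N →+ M} {ψ : N →+ E} {m : M}
    (hm : m ∈ (liftPMap L ψ).domain) : ∃ n, L n = m := by
  obtain ⟨_, ⟨n, rfl⟩, rfl⟩ := Submodule.mem_map.1 hm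
  exact ⟨n, rfl⟩

theorem liftPMap_apply {L : N →+ M} {ψ : N →+ E} (hker : ∀ n, L n = 0 → ψ n = 0)
    {n : N} {m : M} (hnm : L n = m) (hm : m ∈ (liftPMap L ψ).domain) :
    liftPMap L ψ ⟨m, hm⟩ = ψ n := by
  have hgraph : ∀ x ∈ LinearMap.range (L.toIntLinearMap.prod ψ.toIntLinearMap),
      x.1 = 0 → x.2 = 0 := by
    rintro _ ⟨n, rfl⟩ h
    exact hker n h
  obtain ⟨n', hn'⟩ := Submodule.mem_graph_toLinearPMap hgraph ⟨m, hm⟩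
  obtain ⟨hLn', hψn'⟩ := Prod.ext_iff.1 hn'
  have hLn' : L n' = m := hLn'
  have hφn' : liftPMap L ψ ⟨m, hm⟩ = ψ n' := hψn'.symm
  rw [hφn', ← sub_eq_zero, ← map_sub]
  exact hker _ (by simp [hLn', hnm])

namespace IsPartialGrHom

variable {φ : M →ₗ.[ℤ] E}

theorem isGrSub (hφ : IsPartialGrHom ℳ ℰ φ) : ℳ.IsGrSub φ.domain.toAddSubgroup := by
  refine ⟨hφ.smul_mem, fun m hm => ?_⟩
  refine Submodule.iSup_induction _ (motive := (· ∈ AddSubgroup.closure _))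
    (hφ.domain_le_iSup hm) (fun δ x hx => ?_) (zero_mem _) (fun _ _ => add_mem)
  obtain ⟨hx, h, -⟩ := mem_componentLocus.1 hx
  exact AddSubgroup.subset_closure ⟨h, _, _, _, hx⟩

theorem sSup {c : Set (M →ₗ.[ℤ] E)} (hc : DirectedOn (· ≤ ·) c) (hne : c.Nonempty)
    (h : ∀ φ ∈ c, IsPartialGrHom ℳ ℰ φ) : IsPartialGrHom ℳ ℰ (LinearPMap.sSup c hc) := by
  refine ⟨fun m hm a => ?_, fun m a hma => ?_, ?_⟩
  · obtain ⟨φ, hφc, hmφ⟩ := (LinearPMap.mem_domain_sSup_iff hne hc).1 hm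
    exact (LinearPMap.le_sSup hc hφc).1 ((h φ hφc).smul_mem m hmφ a)
  · obtain ⟨φ, hφc, hmφ⟩ := (LinearPMap.mem_domain_sSup_iff hne hc).1 m.2
    have hle := LinearPMap.le_sSup hc hφc
    rw [← hle.2 (x := ⟨_, (h φ hφc).smul_mem _ hmφ a⟩) rfl, ← hle.2 (x := ⟨_, hmφ⟩) rfl]
    exact (h φ hφc).map_smul ⟨_, hmφ⟩ a _
  · rw [LinearPMap.domain_sSup]
    refine sSup_le ?_
    rintro _ ⟨φ, hφc, rfl⟩
    exact (h φ hφc).domain_le_iSup.trans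
      (iSup_mono fun δ => componentLocus_mono (LinearPMap.le_sSup hc hφc) δ)

variable [AddCommGroup R] {𝒜 : GRingData Γ R}

theorem map_mem (hφ : IsPartialGrHom ℳ ℰ φ) (hℳ : ℳ.IsGraded 𝒜) {δ : GrIdx Γ}
    (m : φ.domain) (hm : (m : M) ∈ ℳ.component δ.2.2) : φ m ∈ ℰ.component δ.2.2 := by
  obtain ⟨c, hc, hsum⟩ :=
    (Submodule.mem_iSup_iff_exists_finsupp _ _).1 (hφ.domain_le_iSup m.2)
  have hmc : (m : M) = c δ :=
    hℳ.apply_eq_of_sum_eq (s := {δ}) (c := fun _ => m) (by simpa using hm)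
      (fun γ => (mem_componentLocus.1 (hc γ)).1) (by simpa using hsum.symm) δ
      (Finset.mem_singleton_self δ)
  obtain ⟨-, h, hφc⟩ := mem_componentLocus.1 (hc δ)
  rwa [show m = ⟨c δ, h⟩ from Subtype.ext hmc]

theorem isGrHom_of_forall_mem (hφ : IsPartialGrHom ℳ ℰ φ) (hℳ : ℳ.IsGraded 𝒜)
    (htop : ∀ m, m ∈ φ.domain) : IsGrHom ℳ ℰ (fun m => φ ⟨m, htop m⟩) :=
  ⟨fun m n => φ.map_add ⟨m, htop m⟩ ⟨n, htop n⟩,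
    fun m a => hφ.map_smul ⟨m, htop m⟩ a (htop _),
    fun _ _ σ m hm => hφ.map_mem hℳ (δ := ⟨_, _, σ⟩) ⟨m, htop m⟩ hm⟩

theorem sup (hφ : IsPartialGrHom ℳ ℰ φ) {χ : M →ₗ.[ℤ] E} (hχ : IsPartialGrHom ℳ ℰ χ)
    (hℳ : ℳ.IsGraded 𝒜) (hℰ : ℰ.IsGraded 𝒜)
    (H : ∀ (x : φ.domain) (y : χ.domain), (x : M) = y → φ x = χ y) :
    IsPartialGrHom ℳ ℰ (φ.sup χ H) := by
  refine ⟨fun m hm a => ?_, fun m a hma => ?_, ?_⟩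
  · obtain ⟨p, hp, q, hq, rfl⟩ := Submodule.mem_sup.1 hm
    rw [hℳ.add_smul]
    exact Submodule.add_mem_sup (hφ.smul_mem p hp a) (hχ.smul_mem q hq a)
  · obtain ⟨p, hp, q, hq, hpq⟩ := Submodule.mem_sup.1 m.2
    rw [LinearPMap.sup_apply H ⟨p, hp⟩ ⟨q, hq⟩ m hpq, hℰ.add_smul,
      ← hφ.map_smul ⟨p, hp⟩ a (hφ.smul_mem p hp a),
      ← hχ.map_smul ⟨q, hq⟩ a (hχ.smul_mem q hq a)]
    exact LinearPMap.sup_apply H _ _ ⟨_, hma⟩ (by rw [← hℳ.add_smul, hpq])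
  · exact sup_le
      (hφ.domain_le_iSup.trans (iSup_mono fun δ => componentLocus_mono (φ.left_le_sup χ H) δ))
      (hχ.domain_le_iSup.trans (iSup_mono fun δ => componentLocus_mono (φ.right_le_sup χ H) δ))

theorem liftPMap (h𝒩 : 𝒩.IsGraded 𝒜) {L : N → M} {ψ : N → E} (hL : IsGrHom 𝒩 ℳ L)
    (hψ : IsGrHom 𝒩 ℰ ψ) (hker : ∀ n, L n = 0 → ψ n = 0) :
    IsPartialGrHom ℳ ℰ (liftPMap hL.toAddMonoidHom hψ.toAddMonoidHom) := by
  refine ⟨fun m hm a => ?_, fun ⟨m, hm⟩ a hma => ?_, fun m hm => ?_⟩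
  · obtain ⟨n, rfl⟩ := exists_of_mem_liftPMap_domain hm
    simpa [hL.2.1] using mem_liftPMap_domain hL.toAddMonoidHom hψ.toAddMonoidHom (𝒩.smul n a)
  · obtain ⟨n, hn⟩ := exists_of_mem_liftPMap_domain hm
    rw [liftPMap_apply hker (n := 𝒩.smul n a) (by simp [hL.2.1, ← hn]),
      liftPMap_apply hker hn]
    exact hψ.2.1 n a
  · obtain ⟨n, rfl⟩ := exists_of_mem_liftPMap_domain hm
    obtain ⟨s, c, hc, rfl⟩ := h𝒩.decompose n
    rw [map_sum]
    refine Submodule.sum_mem _ fun γ hγ => Submodule.mem_iSup_of_mem γ <|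
      mem_componentLocus.2 ⟨hL.2.2 _ _ _ _ (hc γ hγ), mem_liftPMap_domain _ _ _, ?_⟩
    rw [liftPMap_apply hker rfl]
    exact hψ.2.2 _ _ _ _ (hc γ hγ)

theorem isHomOfDeg_comp (hφ : IsPartialGrHom ℳ ℰ φ) (hℳ : ℳ.IsGraded 𝒜) {a b : Γ}
    {σ : a ⟶ b} {L : N → M} (hL : IsHomOfDeg 𝒩 ℳ σ L) {U : AddSubgroup N}
    (hU : ∀ n ∈ U, ∀ r : R, 𝒩.smul n r ∈ U) (hLU : ∀ n ∈ U, L n ∈ φ.domain) :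
    IsHomOfDeg (𝒩.restrict U) ℰ σ (fun n => φ ⟨L n, hLU n n.2⟩) := by
  refine ⟨fun n n' => ?_, fun n r => ?_, fun c τ n hn => ?_, fun c d τ hd n hn => ?_⟩ <;>
    beta_reduce
  · exact (congrArg φ (Subtype.ext (hL.1 n n'))).trans (φ.map_add _ _)
  · rw [restrict_smul hU n r, ← hφ.map_smul _ r (by rw [← hL.2.1]; exact hLU _ (hU n n.2 r))]
    exact congrArg φ (Subtype.ext (hL.2.1 n r))
  · exact hφ.map_mem hℳ (δ := ⟨c, b, τ ≫ σ⟩) _ (hL.2.2.1 c τ n hn)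
  · rw [show (⟨L n, hLU n n.2⟩ : φ.domain) = 0 from Subtype.ext (hL.2.2.2 c d τ hd n hn)]
    exact map_zero _

theorem exists_le_mem_domain (hφ : IsPartialGrHom ℳ ℰ φ) (hbaer : GrBaerCriterion 𝒜 ℰ)
    (h𝒜 : 𝒜.IsObjectUnital) (hℳ : ℳ.IsGraded 𝒜) (hℰ : ℰ.IsGraded 𝒜) {a b : Γ}
    {σ : a ⟶ b} {x : M} (hx : x ∈ ℳ.component σ) :
    ∃ φ', IsPartialGrHom ℳ ℰ φ' ∧ φ ≤ φ' ∧ x ∈ φ'.domain := by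
  have hR := h𝒜.toMod_isGraded
  have hL := hℳ.isHomOfDeg_smul hx
  let U := φ.domain.toAddSubgroup.comap hL.isGrHom_shift.toAddMonoidHom
  have hU : 𝒜.toMod.IsGrSub U :=
    (isGrSub_shift_iff σ).1 (hφ.isGrSub.comap (hR.shift σ) hℳ hL.isGrHom_shift)
  obtain ⟨ψ, hψ, hψU⟩ := hbaer U hU a b σ _ (hφ.isHomOfDeg_comp hℳ hL hU.1 fun _ hr => hr)
  have hker : ∀ r, ℳ.smul x r = 0 → ψ r = 0 := fun r hr => by
    have hrU : r ∈ U := by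
      change ℳ.smul x r ∈ φ.domain
      rw [hr]
      exact zero_mem _
    rw [hψU ⟨r, hrU⟩, show (⟨ℳ.smul x r, hrU⟩ : φ.domain) = 0 from Subtype.ext hr]
    exact map_zero _
  let χ := GModData.liftPMap hL.isGrHom_shift.toAddMonoidHom hψ.isGrHom_shift.toAddMonoidHom
  have hχ : IsPartialGrHom ℳ ℰ χ := .liftPMap (hR.shift σ) hL.isGrHom_shift hψ.isGrHom_shift hker
  have H : ∀ (p : φ.domain) (q : χ.domain), (p : M) = q → φ p = χ q := by
    rintro ⟨p, hp⟩ ⟨q, hq⟩ (rfl : p = q)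
    obtain ⟨r, hr⟩ := exists_of_mem_liftPMap_domain hq
    have hrU : r ∈ U := by
      change ℳ.smul x r ∈ φ.domain
      rwa [← hr] at hp
    rw [liftPMap_apply hker hr, IsGrHom.toAddMonoidHom_apply]
    exact (congrArg φ (Subtype.ext hr.symm)).trans (hψU ⟨r, hrU⟩).symm
  refine ⟨φ.sup χ H, hφ.sup hχ hℳ hℰ H, φ.left_le_sup χ H, Submodule.mem_sup_right ?_⟩
  rw [← hℳ.smul_one σ hx]
  exact mem_liftPMap_domain _ _ (𝒜.one a)

end IsPartialGrHom

end GModData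

open GModData in
theorem GrBaerCriterion.grInjective {R E : Type u} [AddCommGroup R] [AddCommGroup E]
    {𝒜 : GRingData Γ R} {ℰ : GModData Γ R E} (hbaer : GrBaerCriterion 𝒜 ℰ)
    (h𝒜 : 𝒜.IsObjectUnital) (hℰ : ℰ.IsGraded 𝒜) : GrInjective 𝒜 ℰ := by
  intro M N _ _ ℳ 𝒩 hℳ h𝒩 g hg hginj h hh
  have hker : ∀ n, g n = 0 → h n = 0 := fun n hn => by
    rw [hginj (hn.trans hg.toAddMonoidHom.map_zero.symm)]
    exact hh.toAddMonoidHom.map_zero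
  obtain ⟨φ, hφ₀, hφ⟩ := zorn_le_nonempty₀ {φ | IsPartialGrHom ℳ ℰ φ}
    (fun c hcS hc φ hφc => ⟨LinearPMap.sSup c hc.directedOn,
      .sSup hc.directedOn ⟨φ, hφc⟩ hcS, fun _ hψ => LinearPMap.le_sSup _ hψ⟩)
    _ (IsPartialGrHom.liftPMap h𝒩 hg hh hker)
  have htop : φ.domain.toAddSubgroup = ⊤ :=
    hℳ.eq_top_of_component_le fun δ x hx => by
      obtain ⟨φ', hφ', hle, hx'⟩ := hφ.prop.exists_le_mem_domain hbaer h𝒜 hℳ hℰ hx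
      exact (hφ.2 hφ' hle).1 hx'
  have hmem : ∀ m, m ∈ φ.domain := fun m => (htop ▸ AddSubgroup.mem_top m :)
  refine ⟨_, hφ.prop.isGrHom_of_forall_mem hℳ hmem, fun n => ?_⟩
  exact (hφ₀.2 (y := ⟨g n, hmem _⟩) rfl).symm.trans
    (liftPMap_apply hker rfl (mem_liftPMap_domain hg.toAddMonoidHom hh.toAddMonoidHom n))

/-- (Graded Baer criterion.) Let `R` be a `Γ`-graded ring and
`E` a `Γ`-graded right `R`-module. Then `E` is gr-injective iff for every graded
right ideal `U` of `R`, every morphism `γ` of `Γ`, and every homomorphism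
`h : U → E` of degree `γ`, there is a homomorphism `h' : R → E` of degree `γ`
extending `h`. -/
theorem grInjective_iff_baer
    {Γ : Type u} [Groupoid.{u} Γ] {R : Type u} [AddCommGroup R] {E : Type u}
    [AddCommGroup E] (𝒜 : GRingData Γ R) (h𝒜 : 𝒜.IsObjectUnital)
    (ℰ : GModData Γ R E) (hℰ : ℰ.IsGraded 𝒜) :
    GrInjective 𝒜 ℰ ↔
      ∀ U : AddSubgroup R, 𝒜.toMod.IsGrSub U →
        ∀ (e f : Γ) (γ : e ⟶ f) (h : ↥U → E),
          GModData.IsHomOfDeg (𝒜.toMod.restrict U) ℰ γ h →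
          ∃ h' : R → E, GModData.IsHomOfDeg 𝒜.toMod ℰ γ h' ∧
            ∀ x : ↥U, h' ↑x = h x :=
  ⟨fun hinj => hinj.grBaerCriterion h𝒜, fun hbaer => GrBaerCriterion.grInjective hbaer h𝒜 hℰ⟩
end

section
/- Let R be a Γ-graded ring and M a Γ-graded right R-module. Then there exist a gr-injective Γ-graded right R-module E and an injective gr-homomorphism from M into E (equivalently, M is a graded submodule of a gr-injective module). -/
open CategoryTheory

universe u

variable {Γ : Type u} [Groupoid.{u} Γ]

/-!
The gr-injective module is coinduced from a divisible abelian group `D` into which `M` embeds.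
Its component of degree `σ : e ⟶ f` consists of the additive maps `Φ : R → (GrIdx Γ → D)` with
`Φ (1_e b) = Φ b` which send `R_κ` into the coordinate `κ ≫ σ`, and `R` acts by
`(Φ a) b = Φ (a b)`, so that the module axioms are inherited from the ring. An additive map
`H : M → (GrIdx Γ → D)` lifts to the gr-homomorphism `m ↦ (b ↦ (ρ ↦ H ((m b)_ρ) ρ))`, and a
gr-homomorphism `h` into the coinduced module is determined by `ev ∘ h`, where
`ev Φ = (ρ ↦ Φ 1_{d ρ} ρ)`. So gr-injectivity comes down to extending `ev ∘ h` along an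
injective map into the divisible group `GrIdx Γ → D`, and `M` embeds by lifting `M ↪ D`.
-/

theorem AddSubgroup.exists_finset_sum_of_mem_iSup {ι A : Type*} [AddCommGroup A]
    {S : ι → AddSubgroup A} {x : A} (hx : x ∈ ⨆ i, S i) :
    ∃ (s : Finset ι) (f : ι → A), (∀ i, f i ∈ S i) ∧ x = ∑ i ∈ s, f i := by
  classical
  have hx' : x ∈ ⨆ i, (S i).toIntSubmodule := by
    rw [← AddSubgroup.toIntSubmodule.map_iSup]
    exact hx
  obtain ⟨f, rfl⟩ := (Submodule.mem_iSup_iff_exists_dfinsupp' _ x).mp hx'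
  exact ⟨f.support, fun i => f i, fun i => (f i).2, rfl⟩

namespace GModData.IsGraded

variable {R : Type u} [AddCommGroup R] {𝒜 : GRingData Γ R} {M : Type u} [AddCommGroup M]
  {ℳ : GModData Γ R M} (hℳ : ℳ.IsGraded 𝒜)
include hℳ

@[elab_as_elim]
theorem induction_on {motive : M → Prop} (m : M) (zero : motive 0)
    (add : ∀ x y, motive x → motive y → motive (x + y))
    (mem : ∀ γ : GrIdx Γ, ∀ x ∈ ℳ.component γ.2.2, motive x) : motive m := by
  obtain ⟨s, cf, hcf, rfl⟩ := hℳ.decompose m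
  exact Finset.sum_induction _ motive add zero fun γ hγ => mem γ _ (hcf γ hγ)

theorem zero_smul (a : R) : ℳ.smul 0 a = 0 := by
  simpa using hℳ.add_smul 0 0 a

open scoped Classical in
theorem isInternal : DirectSum.IsInternal fun γ : GrIdx Γ => ℳ.component γ.2.2 := by
  constructor
  · refine (injective_iff_map_eq_zero _).2 fun z hz => ?_
    rw [DirectSum.coeAddMonoidHom_eq_dfinsuppSum] at hz
    have hzero := hℳ.independent z.support (fun γ => z γ) (fun γ _ => (z γ).2) hz
    ext γ
    by_cases hγ : γ ∈ z.support
    · exact hzero γ hγ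
    · simpa using DFinsupp.notMem_support_iff.mp hγ
  · intro m
    obtain ⟨s, cf, hcf, rfl⟩ := hℳ.decompose m
    refine ⟨∑ γ ∈ s.attach, DirectSum.of _ γ.1 ⟨cf γ, hcf γ γ.2⟩, ?_⟩
    rw [map_sum]
    simp only [DirectSum.coeAddMonoidHom_of]
    exact Finset.sum_attach s cf

open scoped Classical in
noncomputable def proj (ρ : GrIdx Γ) : M →+ M :=
  let := hℳ.isInternal.chooseDecomposition
  AddMonoidHom.mk' (fun m => (DirectSum.decompose (fun γ : GrIdx Γ => ℳ.component γ.2.2) m ρ : M))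
    (fun m n => by simp)

theorem proj_of_mem {ρ : GrIdx Γ} {m : M} (hm : m ∈ ℳ.component ρ.2.2) : hℳ.proj ρ m = m := by
  classical
  let := hℳ.isInternal.chooseDecomposition
  exact DirectSum.decompose_of_mem_same _ hm

theorem proj_of_mem_ne {γ ρ : GrIdx Γ} {m : M} (hm : m ∈ ℳ.component γ.2.2) (hne : γ ≠ ρ) :
    hℳ.proj ρ m = 0 := by
  classical
  let := hℳ.isInternal.chooseDecomposition
  exact DirectSum.decompose_of_mem_ne _ hm hne

theorem eq_zero_of_forall_proj_eq_zero {m : M} (h : ∀ ρ, hℳ.proj ρ m = 0) : m = 0 := by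
  classical
  let := hℳ.isInternal.chooseDecomposition
  refine (DirectSum.decompose fun γ : GrIdx Γ => ℳ.component γ.2.2).injective ?_
  rw [DirectSum.decompose_zero]
  ext ρ
  exact h ρ

theorem proj_smul_one (h𝒜 : 𝒜.IsObjectUnital) (ρ : GrIdx Γ) (m : M) :
    hℳ.proj ρ (ℳ.smul m (𝒜.one ρ.1)) = hℳ.proj ρ m := by
  refine hℳ.induction_on m (by rw [hℳ.zero_smul]) (fun x y hx hy => ?_) (fun γ x hx => ?_)
  · rw [hℳ.add_smul, map_add, map_add, hx, hy]
  by_cases hd : γ.1 = ρ.1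
  · rw [← hd, hℳ.smul_one γ.2.2 hx]
  · rw [hℳ.smul_eq_zero γ.2.2 (𝟙 ρ.1) (Ne.symm hd) hx (h𝒜.one_mem ρ.1), map_zero,
      hℳ.proj_of_mem_ne hx fun h => hd (by rw [h])]

end GModData.IsGraded

namespace GRingData.IsObjectUnital

variable {R : Type u} [AddCommGroup R] {𝒜 : GRingData Γ R} (h𝒜 : 𝒜.IsObjectUnital)
include h𝒜

def mulLeft (a : R) : R →+ R := AddMonoidHom.mk' (𝒜.mul a) (h𝒜.left_distrib a)

theorem zero_mul (a : R) : 𝒜.mul 0 a = 0 := by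
  simpa using h𝒜.right_distrib 0 0 a

theorem toMod_isGraded_s10 : 𝒜.toMod.IsGraded 𝒜 where
  add_smul := h𝒜.right_distrib
  smul_add := h𝒜.left_distrib
  smul_mul a b c := (h𝒜.mul_assoc a b c).symm
  decompose := h𝒜.decompose
  independent := h𝒜.independent
  smul_mem := h𝒜.mul_mem
  smul_eq_zero := h𝒜.mul_eq_zero
  smul_one := h𝒜.mul_one

@[elab_as_elim]
theorem induction_on {motive : R → Prop} (a : R) (zero : motive 0)
    (add : ∀ x y, motive x → motive y → motive (x + y))
    (mem : ∀ γ : GrIdx Γ, ∀ x ∈ 𝒜.component γ.2.2, motive x) : motive a :=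
  h𝒜.toMod_isGraded_s10.induction_on a zero add mem

end GRingData.IsObjectUnital

namespace Coind

variable {R : Type u} [AddCommGroup R] {𝒜 : GRingData Γ R} (h𝒜 : 𝒜.IsObjectUnital)
  (D : Type u) [AddCommGroup D]

def smul (Φ : R →+ (GrIdx Γ → D)) (a : R) : R →+ (GrIdx Γ → D) := Φ.comp (h𝒜.mulLeft a)

variable (𝒜) in
/-- A copy of `Hom(1_e R, D)`. Recording the value on `R_κ` at the coordinate `κ ≫ σ` makes the
sum of these components direct, since `κ ≫ σ` determines `σ` once `κ` is known. -/
def component {e f : Γ} (σ : e ⟶ f) : AddSubgroup (R →+ (GrIdx Γ → D)) where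
  carrier := {Φ | (∀ b, Φ (𝒜.mul (𝒜.one e) b) = Φ b) ∧
    ∀ {h : Γ} (κ : h ⟶ e), ∀ b ∈ 𝒜.component κ, ∀ ρ : GrIdx Γ, ρ ≠ ⟨h, f, κ ≫ σ⟩ → Φ b ρ = 0}
  add_mem' := by
    rintro Φ Ψ ⟨hΦ, hΦ'⟩ ⟨hΨ, hΨ'⟩
    refine ⟨fun b => by simp [hΦ, hΨ], fun κ b hb ρ hρ => ?_⟩
    simp [hΦ' κ b hb ρ hρ, hΨ' κ b hb ρ hρ]
  zero_mem' := ⟨fun _ => rfl, fun _ _ _ _ _ => rfl⟩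
  neg_mem' := by
    rintro Φ ⟨hΦ, hΦ'⟩
    exact ⟨fun b => by simp [hΦ], fun κ b hb ρ hρ => by simp [hΦ' κ b hb ρ hρ]⟩

variable (𝒜) in
def carrier : AddSubgroup (R →+ (GrIdx Γ → D)) := ⨆ γ : GrIdx Γ, component 𝒜 D γ.2.2

variable {D}

section component

include h𝒜

variable {e f : Γ} {σ : e ⟶ f} {Φ : R →+ (GrIdx Γ → D)} (hΦ : Φ ∈ component 𝒜 D σ)
include hΦ

theorem apply_eq_zero_of_ne {h e' : Γ} {κ : h ⟶ e'} {b : R} (hb : b ∈ 𝒜.component κ)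
    (he' : e' ≠ e) : Φ b = 0 := by
  rw [← hΦ.1 b, h𝒜.mul_eq_zero (𝟙 e) κ he' (h𝒜.one_mem e) hb, map_zero]

theorem apply_apply_eq_zero_of_ne {h e' f' : Γ} (κ : h ⟶ e') {b : R}
    (hb : b ∈ 𝒜.component κ) (σ' : e' ⟶ f') (hne : (⟨e, f, σ⟩ : GrIdx Γ) ≠ ⟨e', f', σ'⟩) :
    Φ b ⟨h, f', κ ≫ σ'⟩ = 0 := by
  by_cases he' : e' = e
  · subst he'
    refine hΦ.2 κ b hb _ fun heq => hne ?_
    obtain ⟨-, hf⟩ := Sigma.mk.inj_iff.mp heq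
    obtain ⟨rfl, hσ⟩ := Sigma.mk.inj_iff.mp (eq_of_heq hf)
    rw [(cancel_epi κ).mp (eq_of_heq hσ)]
  · rw [apply_eq_zero_of_ne h𝒜 hΦ hb he', Pi.zero_apply]

theorem smul_mem_component {g : Γ} {τ : g ⟶ e} {a : R} (ha : a ∈ 𝒜.component τ) :
    smul h𝒜 D Φ a ∈ component 𝒜 D (τ ≫ σ) := by
  refine ⟨fun b => ?_, fun κ b hb ρ hρ => ?_⟩
  · change Φ (𝒜.mul a (𝒜.mul (𝒜.one g) b)) = Φ (𝒜.mul a b)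
    rw [← h𝒜.mul_assoc, h𝒜.mul_one τ ha]
  · exact hΦ.2 (κ ≫ τ) _ (h𝒜.mul_mem τ κ ha hb) ρ (by rwa [Category.assoc])

theorem smul_eq_zero_of_ne {g h : Γ} {τ : g ⟶ h} {a : R} (ha : a ∈ 𝒜.component τ) (hne : h ≠ e) :
    smul h𝒜 D Φ a = 0 := by
  ext b : 1
  change Φ (𝒜.mul a b) = 0
  rw [← hΦ.1, ← h𝒜.mul_assoc, h𝒜.mul_eq_zero (𝟙 e) τ hne (h𝒜.one_mem e) ha, h𝒜.zero_mul,
    map_zero]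

theorem smul_one_of_mem : smul h𝒜 D Φ (𝒜.one e) = Φ :=
  AddMonoidHom.ext hΦ.1

end component

theorem smul_add (Φ : R →+ (GrIdx Γ → D)) (a b : R) :
    smul h𝒜 D Φ (a + b) = smul h𝒜 D Φ a + smul h𝒜 D Φ b := by
  ext c : 1
  exact (congrArg Φ (h𝒜.right_distrib a b c)).trans (map_add Φ _ _)

theorem smul_zero (Φ : R →+ (GrIdx Γ → D)) : smul h𝒜 D Φ 0 = 0 := by
  ext c : 1
  exact (congrArg Φ (h𝒜.zero_mul c)).trans (map_zero Φ)

theorem smul_mul (Φ : R →+ (GrIdx Γ → D)) (a b : R) :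
    smul h𝒜 D Φ (𝒜.mul a b) = smul h𝒜 D (smul h𝒜 D Φ a) b := by
  ext c : 1
  exact congrArg Φ (h𝒜.mul_assoc a b c)

theorem smul_mem_carrier {Φ : R →+ (GrIdx Γ → D)} (hΦ : Φ ∈ carrier 𝒜 D) (a : R) :
    smul h𝒜 D Φ a ∈ carrier 𝒜 D := by
  refine AddSubgroup.iSup_induction (C := fun Φ => smul h𝒜 D Φ a ∈ carrier 𝒜 D) _ hΦ
    (fun σ Φ hΦ => ?_) (zero_mem _) (fun Φ Ψ => add_mem)
  refine h𝒜.induction_on a ?_ (fun a b ha hb => ?_) (fun τ a ha => ?_)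
  · rw [smul_zero]
    exact zero_mem _
  · rw [smul_add]
    exact add_mem ha hb
  · obtain ⟨g, h, τ⟩ := τ
    by_cases hne : h = σ.1
    · subst hne
      exact AddSubgroup.mem_iSup_of_mem ⟨g, σ.2.1, τ ≫ σ.2.2⟩ (smul_mem_component h𝒜 hΦ ha)
    · rw [smul_eq_zero_of_ne h𝒜 hΦ ha hne]
      exact zero_mem _

include h𝒜 in
theorem eq_zero_of_sum_eq_zero {s : Finset (GrIdx Γ)} {Φ : GrIdx Γ → R →+ (GrIdx Γ → D)}
    (hΦ : ∀ γ ∈ s, Φ γ ∈ component 𝒜 D γ.2.2) (hsum : ∑ γ ∈ s, Φ γ = 0) {σ : GrIdx Γ}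
    (hσ : σ ∈ s) : Φ σ = 0 := by
  obtain ⟨e, f, σ⟩ := σ
  ext b : 1
  refine h𝒜.induction_on b (map_zero _) (fun b c hb hc => ?_) (fun κ b hb => ?_)
  · rw [map_add, map_add, hb, hc]
  obtain ⟨h, e', κ⟩ := κ
  by_cases he' : e' = e
  · subst he'
    funext ρ
    by_cases hρ : ρ = ⟨h, f, κ ≫ σ⟩
    · subst hρ
      have := congrFun (DFunLike.congr_fun hsum b) ⟨h, f, κ ≫ σ⟩
      simp only [AddMonoidHom.finsetSum_apply, Finset.sum_apply] at this
      rwa [Finset.sum_eq_single_of_mem _ hσ fun γ hγ hne =>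
        apply_apply_eq_zero_of_ne h𝒜 (hΦ γ hγ) κ hb σ hne] at this
    · exact (hΦ _ hσ).2 κ b hb ρ hρ
  · exact apply_eq_zero_of_ne h𝒜 (hΦ _ hσ) hb he'

variable (D) in
def data : GModData Γ R (carrier 𝒜 D) where
  smul Φ a := ⟨smul h𝒜 D Φ a, smul_mem_carrier h𝒜 Φ.2 a⟩
  component σ := (component 𝒜 D σ).addSubgroupOf (carrier 𝒜 D)

variable (D) in
theorem isGraded : (data h𝒜 D).IsGraded 𝒜 where
  add_smul Φ Ψ a := Subtype.ext (AddMonoidHom.add_comp _ _ _)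
  smul_add Φ a b := Subtype.ext (smul_add h𝒜 Φ.1 a b)
  smul_mul Φ a b := Subtype.ext (smul_mul h𝒜 Φ.1 a b)
  decompose Φ := by
    obtain ⟨s, Ψ, hΨ, hΦ⟩ := AddSubgroup.exists_finset_sum_of_mem_iSup Φ.2
    refine ⟨s, fun γ => ⟨Ψ γ, AddSubgroup.mem_iSup_of_mem γ (hΨ γ)⟩, fun γ _ => hΨ γ, ?_⟩
    exact Subtype.ext (by rw [hΦ, AddSubgroup.val_finsetSum])
  independent s Φ hΦ hsum γ hγ := Subtype.ext <|
    eq_zero_of_sum_eq_zero h𝒜 (Φ := fun γ => (Φ γ).1) hΦ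
      (by rw [← AddSubgroup.val_finsetSum, hsum]; rfl) hγ
  smul_mem σ τ _ _ hΦ ha := smul_mem_component h𝒜 hΦ ha
  smul_eq_zero σ τ _ _ hne hΦ ha := Subtype.ext (smul_eq_zero_of_ne h𝒜 hΦ ha hne)
  smul_one σ _ hΦ := Subtype.ext (smul_one_of_mem h𝒜 hΦ)

variable (𝒜 D) in
def ev : (R →+ (GrIdx Γ → D)) →+ (GrIdx Γ → D) where
  toFun Φ ρ := Φ (𝒜.one ρ.1) ρ
  map_zero' := rfl
  map_add' _ _ := rfl

include h𝒜 in
theorem ev_eq_zero_of_mem_ne {γ ρ : GrIdx Γ} {Φ : R →+ (GrIdx Γ → D)}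
    (hΦ : Φ ∈ component 𝒜 D γ.2.2) (hne : γ ≠ ρ) : ev 𝒜 D Φ ρ = 0 := by
  obtain ⟨e, f, σ⟩ := ρ
  simpa [ev] using apply_apply_eq_zero_of_ne h𝒜 hΦ (𝟙 e) (h𝒜.one_mem e) σ hne

include h𝒜 in
theorem apply_mul_one {Φ : R →+ (GrIdx Γ → D)} (hΦ : Φ ∈ carrier 𝒜 D) (b : R) (ρ : GrIdx Γ) :
    Φ (𝒜.mul b (𝒜.one ρ.1)) ρ = Φ b ρ := by
  refine AddSubgroup.iSup_induction (C := fun Φ => Φ (𝒜.mul b (𝒜.one ρ.1)) ρ = Φ b ρ) _ hΦ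
    (fun σ Φ hΦ => ?_) rfl (fun Φ Ψ hΦ hΨ => by simp [hΦ, hΨ])
  refine h𝒜.induction_on b (by simp [h𝒜.zero_mul]) (fun b c hb hc => ?_) (fun κ b hb => ?_)
  · simp [h𝒜.right_distrib, hb, hc]
  obtain ⟨h, e', κ⟩ := κ
  by_cases hh : h = ρ.1
  · rw [← hh, h𝒜.mul_one κ hb]
  rw [h𝒜.mul_eq_zero κ (𝟙 ρ.1) (Ne.symm hh) hb (h𝒜.one_mem _), map_zero, Pi.zero_apply]
  by_cases he' : e' = σ.1
  · obtain ⟨e, f, σ⟩ := σ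
    subst he'
    exact (hΦ.2 κ b hb ρ fun h' => hh (by rw [h'])).symm
  · rw [apply_eq_zero_of_ne h𝒜 hΦ hb he', Pi.zero_apply]

include h𝒜 in
theorem apply_eq_ev_smul {Φ : R →+ (GrIdx Γ → D)} (hΦ : Φ ∈ carrier 𝒜 D) (b : R) :
    Φ b = ev 𝒜 D (smul h𝒜 D Φ b) :=
  funext fun ρ => (apply_mul_one h𝒜 hΦ b ρ).symm

section lift

variable {M : Type u} [AddCommGroup M] {ℳ : GModData Γ R M} (hℳ : ℳ.IsGraded 𝒜)
  (H : M →+ (GrIdx Γ → D))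

noncomputable def lift : M →+ (R →+ (GrIdx Γ → D)) :=
  AddMonoidHom.mk'
    (fun m => AddMonoidHom.mk' (fun b ρ => H (hℳ.proj ρ (ℳ.smul m b)) ρ)
      (fun b c => funext fun ρ => by simp [hℳ.smul_add]))
    (fun m n => AddMonoidHom.ext fun b => funext fun ρ => by simp [hℳ.add_smul])

theorem lift_apply (m : M) (b : R) (ρ : GrIdx Γ) :
    lift hℳ H m b ρ = H (hℳ.proj ρ (ℳ.smul m b)) ρ :=
  rfl

theorem lift_smul (m : M) (a : R) : lift hℳ H (ℳ.smul m a) = smul h𝒜 D (lift hℳ H m) a :=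
  AddMonoidHom.ext fun b => funext fun ρ => by
    change _ = H (hℳ.proj ρ (ℳ.smul m (𝒜.mul a b))) ρ
    rw [lift_apply, hℳ.smul_mul]

theorem lift_mem_component {e f : Γ} {σ : e ⟶ f} {m : M} (hm : m ∈ ℳ.component σ) :
    lift hℳ H m ∈ component 𝒜 D σ := by
  refine ⟨fun b => funext fun ρ => ?_, fun κ b hb ρ hρ => ?_⟩
  · rw [lift_apply, lift_apply, hℳ.smul_mul, hℳ.smul_one σ hm]
  · rw [lift_apply, hℳ.proj_of_mem_ne (γ := ⟨_, _, κ ≫ σ⟩) (hℳ.smul_mem σ κ hm hb) hρ.symm,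
      map_zero, Pi.zero_apply]

theorem lift_mem_carrier (m : M) : lift hℳ H m ∈ carrier 𝒜 D :=
  hℳ.induction_on m (by rw [map_zero]; exact zero_mem _)
    (fun x y hx hy => by rw [map_add]; exact add_mem hx hy)
    (fun γ _ hx => AddSubgroup.mem_iSup_of_mem γ (lift_mem_component hℳ H hx))

include h𝒜 in
theorem ev_lift (m : M) (ρ : GrIdx Γ) : ev 𝒜 D (lift hℳ H m) ρ = H (hℳ.proj ρ m) ρ := by
  change H (hℳ.proj ρ (ℳ.smul m (𝒜.one ρ.1))) ρ = _
  rw [hℳ.proj_smul_one h𝒜]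

noncomputable def grLift (m : M) : carrier 𝒜 D := ⟨lift hℳ H m, lift_mem_carrier hℳ H m⟩

theorem isGrHom_grLift : GModData.IsGrHom ℳ (data h𝒜 D) (grLift hℳ H) :=
  ⟨fun m n => Subtype.ext (map_add _ m n), fun m a => Subtype.ext (lift_smul h𝒜 hℳ H m a),
    fun _ _ _ _ hm => lift_mem_component hℳ H hm⟩

include h𝒜 in
theorem grLift_injective {Ψ : M →+ D} (hΨ : Function.Injective Ψ) :
    Function.Injective (grLift hℳ (AddMonoidHom.pi fun _ => Ψ)) := by
  refine Function.Injective.of_comp (f := Subtype.val)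
    ((injective_iff_map_eq_zero (lift hℳ _)).2 fun m hm => ?_)
  refine hℳ.eq_zero_of_forall_proj_eq_zero fun ρ => (injective_iff_map_eq_zero Ψ).1 hΨ _ ?_
  simpa [ev_lift h𝒜] using congrFun (congrArg (ev 𝒜 D) hm) ρ

include h𝒜 in
theorem ev_lift_comp {N : Type u} [AddCommGroup N] {𝒩 : GModData Γ R N} (h𝒩 : 𝒩.IsGraded 𝒜)
    {g : N →+ M} (hg : ∀ γ : GrIdx Γ, ∀ n ∈ 𝒩.component γ.2.2, g n ∈ ℳ.component γ.2.2)
    {h : N →+ (R →+ (GrIdx Γ → D))}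
    (hh : ∀ γ : GrIdx Γ, ∀ n ∈ 𝒩.component γ.2.2, h n ∈ component 𝒜 D γ.2.2)
    (hH : ∀ n, H (g n) = ev 𝒜 D (h n)) (n : N) :
    ev 𝒜 D (lift hℳ H (g n)) = ev 𝒜 D (h n) := by
  funext ρ
  rw [ev_lift h𝒜]
  refine h𝒩.induction_on n (by simp) (fun x y hx hy => by simp [hx, hy]) (fun γ x hx => ?_)
  by_cases hγ : γ = ρ
  · subst hγ
    rw [hℳ.proj_of_mem (hg γ x hx), hH]
  · rw [hℳ.proj_of_mem_ne (hg γ x hx) hγ, ev_eq_zero_of_mem_ne h𝒜 (hh γ x hx) hγ, map_zero,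
      Pi.zero_apply]

end lift

variable (D) in
theorem grInjective [DivisibleBy D ℤ] : GrInjective 𝒜 (data h𝒜 D) := by
  intro M N _ _ ℳ 𝒩 hℳ h𝒩 g hg hg_inj h hh
  let gHom : N →+ M := AddMonoidHom.mk' g hg.1
  let hHom : N →+ (R →+ (GrIdx Γ → D)) := (carrier 𝒜 D).subtype.comp (AddMonoidHom.mk' h hh.1)
  obtain ⟨H, hext⟩ := (Module.Baer.of_divisible (GrIdx Γ → D)).extension_property_addMonoidHom
    gHom hg_inj ((ev 𝒜 D).comp hHom)
  have hev := ev_lift_comp h𝒜 hℳ H h𝒩 (g := gHom) (h := hHom)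
    (fun γ n hn => hg.2.2 _ _ _ n hn) (fun γ n hn => hh.2.2 _ _ _ n hn)
    (DFunLike.congr_fun hext)
  refine ⟨grLift hℳ H, isGrHom_grLift h𝒜 hℳ H,
    fun n => Subtype.ext (AddMonoidHom.ext fun b => ?_)⟩
  change lift hℳ H (g n) b = (h n).1 b
  rw [apply_eq_ev_smul h𝒜 (lift_mem_carrier hℳ H _),
    apply_eq_ev_smul h𝒜 (h n).2, ← lift_smul h𝒜, ← hg.2.1]
  exact (hev _).trans (congrArg (fun x => ev 𝒜 D x.1) (hh.2.1 n b))

end Coind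

theorem exists_injective_addMonoidHom_divisible (M : Type u) [AddCommGroup M] :
    ∃ (D : Type u) (_ : AddCommGroup D) (_ : DivisibleBy D ℤ) (ι : M →+ D),
      Function.Injective ι :=
  ⟨CharacterModule M → ULift.{u} (AddCircle (1 : ℚ)), inferInstance, inferInstance,
    ⟨⟨fun m c => ULift.up (c m), by aesop⟩, by aesop⟩,
    (injective_iff_map_eq_zero _).2 fun _ hm =>
      CharacterModule.eq_zero_of_character_apply fun c => congrArg ULift.down (congrFun hm c)⟩

/-- Let `R` be a `Γ`-graded ring and `M` a `Γ`-graded right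
`R`-module. Then there exist a gr-injective `Γ`-graded right `R`-module `E` and
an injective gr-homomorphism `M → E`. -/
theorem exists_grInjective_embedding
    {Γ : Type u} [Groupoid.{u} Γ] {R : Type u} [AddCommGroup R] {M : Type u}
    [AddCommGroup M] (𝒜 : GRingData Γ R) (h𝒜 : 𝒜.IsObjectUnital)
    (ℳ : GModData Γ R M) (hℳ : ℳ.IsGraded 𝒜) :
    ∃ ℰ : GrModule Γ 𝒜, GrInjective 𝒜 ℰ.data ∧
      ∃ g : M → ℰ.carrier, GModData.IsGrHom ℳ ℰ.data g ∧ Function.Injective g := by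
  obtain ⟨D, _, _, ι, hι⟩ := exists_injective_addMonoidHom_divisible M
  exact ⟨⟨Coind.carrier 𝒜 D, Coind.data h𝒜 D, Coind.isGraded h𝒜 D⟩, Coind.grInjective h𝒜 D,
    Coind.grLift hℳ _, Coind.isGrHom_grLift h𝒜 hℳ _, Coind.grLift_injective h𝒜 hℳ hι⟩
end

section
/- Let R be a Γ-graded ring and M a Γ-graded right R-module. Then: (1) rad^gr(M) equals the sum of all gr-superfluous graded submodules of M; (2) soc_gr(M) equals the intersection of all gr-essential graded submodules of M. -/
open CategoryTheory

universe u

variable {Γ : Type u} [Groupoid.{u} Γ]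

/-! The graded submodules of `M` form a complete sublattice of the modular lattice of additive
subgroups of `M`; closure under intersections comes from the uniqueness of homogeneous
decompositions. This lattice is compactly generated, because a directed union of subgroups is their
supremum, so the smallest graded submodule containing a given element is compact. Both claims are
then facts about such lattices. In a compactly generated lattice a compact element lying below
every coatom is superfluous: otherwise Zorn's lemma yields a coatom avoiding it. In a modular
compactly generated lattice every element `a` has a `b` with `a ⊓ b = ⊥` and `a ⊔ b` essential, so
the interval below the meet of all essential elements is complemented, hence atomistic. -/

section Lattice

variable {α : Type*} [CompleteLattice α]

def IsSuperfluous (a : α) : Prop := ∀ b, a ⊔ b = ⊤ → b = ⊤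

def IsEssential (a : α) : Prop := ∀ b, a ⊓ b = ⊥ → b = ⊥

theorem IsSuperfluous.le_of_isCoatom {a m : α} (ha : IsSuperfluous a) (hm : IsCoatom m) :
    a ≤ m := by
  by_contra h
  exact hm.1 (ha m (sup_comm a m ▸ hm.2 _ (left_lt_sup.mpr h)))

theorem IsAtom.le_of_isEssential {a e : α} (ha : IsAtom a) (he : IsEssential e) : a ≤ e := by
  by_contra h
  refine ha.1 (he a ?_)
  rw [inf_comm]
  exact (ha.le_iff.mp inf_le_left).resolve_right fun h' => h (h' ▸ inf_le_right)

theorem IsCompactElement.exists_isCoatom_of_sup_eq_top {c b : α} (hc : IsCompactElement c)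
    (hcb : c ⊔ b = ⊤) (hb : b ≠ ⊤) : ∃ m, IsCoatom m ∧ b ≤ m ∧ ¬c ≤ m := by
  have hchain : ∀ s ⊆ {x | b ≤ x ∧ ¬c ≤ x}, IsChain (· ≤ ·) s → ∀ x ∈ s,
      ∃ ub ∈ {x | b ≤ x ∧ ¬c ≤ x}, ∀ y ∈ s, y ≤ ub := by
    intro s hs hchain x hx
    refine ⟨sSup s, ⟨(hs hx).1.trans (le_sSup hx), fun hle => ?_⟩, fun _ => le_sSup⟩
    obtain ⟨y, hy, hcy⟩ := hc s (sSup s) ⟨x, hx⟩ hchain.directedOn (isLUB_sSup s) hle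
    exact (hs hy).2 hcy
  obtain ⟨m, hbm, hmax⟩ := zorn_le_nonempty₀ _ hchain b
    ⟨le_rfl, fun h => hb (by rwa [sup_eq_right.mpr h] at hcb)⟩
  refine ⟨m, ⟨fun h => hmax.1.2 (h ▸ le_top), fun x hmx => ?_⟩, hbm, hmax.1.2⟩
  have hcx : c ≤ x := by
    by_contra hcx
    exact hmx.not_ge (hmax.2 ⟨hbm.trans hmx.le, hcx⟩ hmx.le)
  exact top_le_iff.mp (hcb ▸ sup_le hcx (hbm.trans hmx.le))

theorem IsCompactElement.isSuperfluous_of_le_sInf_coatoms {c : α} (hc : IsCompactElement c)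
    (hle : c ≤ sInf {m : α | IsCoatom m}) : IsSuperfluous c := by
  intro b hcb
  by_contra hb
  obtain ⟨m, hm, -, hcm⟩ := hc.exists_isCoatom_of_sup_eq_top hcb hb
  exact hcm (hle.trans (sInf_le hm))

theorem sInf_coatoms_eq_sSup_isSuperfluous [IsCompactlyGenerated α] :
    sInf {m : α | IsCoatom m} = sSup {a : α | IsSuperfluous a} := by
  refine le_antisymm ?_ (sSup_le fun a ha => le_sInf fun m hm => ha.le_of_isCoatom hm)
  rw [← sSup_compact_le_eq (sInf {m : α | IsCoatom m})]
  exact sSup_le_sSup fun c ⟨hc, hle⟩ => hc.isSuperfluous_of_le_sInf_coatoms hle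

theorem exists_disjoint_isEssential_sup [IsModularLattice α] [IsCompactlyGenerated α] (a : α) :
    ∃ b, Disjoint a b ∧ IsEssential (a ⊔ b) := by
  have hchain : ∀ s ⊆ {x | Disjoint a x}, IsChain (· ≤ ·) s → ∀ x ∈ s,
      ∃ ub ∈ {x | Disjoint a x}, ∀ y ∈ s, y ≤ ub := fun s hs hchain _ _ =>
    ⟨sSup s, hchain.directedOn.disjoint_sSup_right.mpr fun _ hx => hs hx, fun _ => le_sSup⟩
  obtain ⟨b, -, hmax⟩ := zorn_le_nonempty₀ _ hchain ⊥ disjoint_bot_right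
  refine ⟨b, hmax.1, fun x hx => ?_⟩
  have hxb : x ≤ b := le_sup_right.trans
    (hmax.2 (hmax.1.disjoint_sup_right_of_disjoint_sup_left (disjoint_iff.mpr hx)) le_sup_left)
  exact (disjoint_iff.mpr hx).eq_bot_of_ge (hxb.trans le_sup_right)

theorem complementedLattice_Iic_sInf_isEssential [IsModularLattice α] [IsCompactlyGenerated α] :
    ComplementedLattice (Set.Iic (sInf {e : α | IsEssential e})) := by
  refine Set.Iic.complementedLattice_iff.mpr fun a ha => ?_
  obtain ⟨b, hab, hess⟩ := exists_disjoint_isEssential_sup a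
  refine ⟨b ⊓ sInf {e : α | IsEssential e}, inf_le_right,
    disjoint_iff.mp (hab.mono_right inf_le_left), ?_⟩
  rw [← sup_inf_assoc_of_le b ha]
  exact inf_eq_right.mpr (sInf_le hess)

theorem sSup_atoms_eq_sInf_isEssential [IsModularLattice α] [IsCompactlyGenerated α] :
    sSup {a : α | IsAtom a} = sInf {e : α | IsEssential e} := by
  refine le_antisymm (sSup_le fun a ha => le_sInf fun e he => ha.le_of_isEssential he) ?_
  have := complementedLattice_Iic_sInf_isEssential (α := α)
  have h := congrArg Subtype.val (sSup_atoms_eq_top (α := Set.Iic (sInf {e : α | IsEssential e})))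
  rw [Set.Iic.coe_sSup, Set.Iic.coe_top] at h
  rw [← h]
  exact sSup_le_sSup (Set.image_subset_iff.mpr fun a ha => ha.of_isAtom_coe_Iic)

end Lattice

namespace CompleteSublattice

instance instIsModularLattice {α : Type*} [CompleteLattice α] [IsModularLattice α]
    (L : CompleteSublattice α) : IsModularLattice L :=
  ⟨fun {x} y {z} h => (IsModularLattice.sup_inf_le_assoc_of_le (y : α) h :
    ((x : α) ⊔ y) ⊓ z ≤ x ⊔ y ⊓ z)⟩

variable {G : Type*} [AddGroup G] (L : CompleteSublattice (AddSubgroup G))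

def closure (x : G) : L := sInf {N : L | x ∈ (N : AddSubgroup G)}

variable {L}

theorem mem_closure (x : G) : x ∈ (L.closure x : AddSubgroup G) :=
  AddSubgroup.mem_sInf.mpr fun _ ⟨_, hN, h⟩ => h ▸ hN

theorem closure_le {x : G} {N : L} (hx : x ∈ (N : AddSubgroup G)) : L.closure x ≤ N :=
  sInf_le hx

theorem isCompactElement_closure (x : G) : IsCompactElement (L.closure x) := by
  refine fun s u hne hdir hu hle => ?_
  rw [← isLUB_iff_sSup_eq.mp hu] at hle
  obtain ⟨_, ⟨N, hN, rfl⟩, hxN⟩ := (AddSubgroup.mem_sSup_of_directedOn (hne.image _)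
    (directedOn_image.mpr (hdir.mono fun _ _ h => h))).mp (hle (mem_closure x))
  exact ⟨N, hN, closure_le hxN⟩

instance instIsCompactlyGenerated : IsCompactlyGenerated L := by
  refine ⟨fun N => ⟨{C | ∃ x ∈ (N : AddSubgroup G), C = L.closure x}, ?_, le_antisymm ?_ ?_⟩⟩
  · rintro _ ⟨x, -, rfl⟩
    exact isCompactElement_closure x
  · exact sSup_le fun _ ⟨x, hx, hC⟩ => hC ▸ closure_le hx
  · exact fun x hx => le_sSup (s := {C | ∃ x ∈ (N : AddSubgroup G), C = L.closure x})
      ⟨x, hx, rfl⟩ (mem_closure x)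

end CompleteSublattice

namespace GModData

variable {R : Type u} {M : Type u} [AddCommGroup M] {ℳ : GModData Γ R M}

def decompositionsIn (ℳ : GModData Γ R M) (N : AddSubgroup M) :
    AddSubgroup (GrIdx Γ →₀ M) where
  carrier := {f | ∀ γ : GrIdx Γ, f γ ∈ ℳ.component γ.2.2 ⊓ N}
  add_mem' {f g} hf hg γ := by simpa using add_mem (hf γ) (hg γ)
  zero_mem' γ := by simp
  neg_mem' {f} hf γ := by simpa using neg_mem (hf γ)

noncomputable abbrev sumHom (Γ : Type u) [Groupoid.{u} Γ] (M : Type u) [AddCommGroup M] :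
    (GrIdx Γ →₀ M) →+ M :=
  Finsupp.liftAddHom fun _ => AddMonoidHom.id M

theorem decompositionsIn_mono {N P : AddSubgroup M} (h : N ≤ P) :
    ℳ.decompositionsIn N ≤ ℳ.decompositionsIn P :=
  fun _ hf γ => inf_le_inf_left _ h (hf γ)

theorem single_mem_decompositionsIn {N : AddSubgroup M} {γ : GrIdx Γ} {x : M}
    (hx : x ∈ ℳ.component γ.2.2 ⊓ N) : Finsupp.single γ x ∈ ℳ.decompositionsIn N := by
  intro δ
  rcases eq_or_ne γ δ with rfl | hne
  · simpa using hx
  · simp [hne]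

theorem map_decompositionsIn_le_closure (N : AddSubgroup M) :
    (ℳ.decompositionsIn N).map (sumHom Γ M) ≤
      AddSubgroup.closure {x | x ∈ N ∧ ℳ.IsHomogeneous x} := by
  rintro _ ⟨f, hf, rfl⟩
  rw [Finsupp.liftAddHom_apply]
  exact sum_mem fun γ _ => AddSubgroup.subset_closure ⟨(hf γ).2, _, _, _, (hf γ).1⟩

theorem isGrSub_iff {N : AddSubgroup M} : ℳ.IsGrSub N ↔
    (∀ m ∈ N, ∀ a, ℳ.smul m a ∈ N) ∧ N ≤ (ℳ.decompositionsIn N).map (sumHom Γ M) := by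
  refine and_congr_right fun _ =>
    ⟨fun h n hn => ?_, fun h n hn => map_decompositionsIn_le_closure N (h hn)⟩
  refine (AddSubgroup.closure_le _).mpr ?_ (h n hn)
  rintro x ⟨hxN, e, f, σ, hx⟩
  exact ⟨_, single_mem_decompositionsIn (γ := ⟨e, f, σ⟩) ⟨hx, hxN⟩, by simp⟩

namespace IsGraded

variable [AddCommGroup R] {𝒜 : GRingData Γ R}

theorem map_decompositionsIn_top (hℳ : ℳ.IsGraded 𝒜) :
    (ℳ.decompositionsIn ⊤).map (sumHom Γ M) = ⊤ := by
  refine eq_top_iff.mpr fun x _ => ?_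
  obtain ⟨s, cf, hcf, rfl⟩ := hℳ.decompose x
  exact sum_mem fun γ hγ => ⟨_, single_mem_decompositionsIn ⟨hcf γ hγ, trivial⟩, by simp⟩

theorem eq_of_sumHom_eq (hℳ : ℳ.IsGraded 𝒜) {f g : GrIdx Γ →₀ M}
    (hf : f ∈ ℳ.decompositionsIn ⊤) (hg : g ∈ ℳ.decompositionsIn ⊤)
    (h : sumHom Γ M f = sumHom Γ M g) : f = g := by
  have hsum : sumHom Γ M (f - g) = 0 := by rw [map_sub, h, sub_self]
  rw [Finsupp.liftAddHom_apply] at hsum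
  rw [← sub_eq_zero]
  ext γ
  by_contra hγ
  exact hγ (hℳ.independent (f - g).support (f - g) (fun δ _ => ((sub_mem hf hg) δ).1) hsum γ
    (Finsupp.mem_support_iff.mpr hγ))

theorem mem_decompositionsIn (hℳ : ℳ.IsGraded 𝒜) {N : AddSubgroup M} (hN : ℳ.IsGrSub N)
    {f : GrIdx Γ →₀ M} (hf : f ∈ ℳ.decompositionsIn ⊤) (hfN : sumHom Γ M f ∈ N) :
    f ∈ ℳ.decompositionsIn N := by
  obtain ⟨g, hg, hgf⟩ := (isGrSub_iff.mp hN).2 hfN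
  rwa [← hℳ.eq_of_sumHom_eq (decompositionsIn_mono le_top hg) hf hgf]

theorem isGrSub_sInf (hℳ : ℳ.IsGraded 𝒜) {S : Set (AddSubgroup M)}
    (hS : ∀ N ∈ S, ℳ.IsGrSub N) : ℳ.IsGrSub (sInf S) := by
  refine isGrSub_iff.mpr ⟨fun m hm a => AddSubgroup.mem_sInf.mpr fun N hN =>
    (hS N hN).1 m (AddSubgroup.mem_sInf.mp hm N hN) a, fun n hn => ?_⟩
  obtain ⟨f, hf, rfl⟩ := hℳ.map_decompositionsIn_top.ge (AddSubgroup.mem_top n)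
  refine ⟨f, fun γ => ⟨(hf γ).1, AddSubgroup.mem_sInf.mpr fun N hN => ?_⟩, rfl⟩
  exact (hℳ.mem_decompositionsIn (hS N hN) hf (AddSubgroup.mem_sInf.mp hn N hN) γ).2

def smulRight (hℳ : ℳ.IsGraded 𝒜) (a : R) : M →+ M :=
  AddMonoidHom.mk' (ℳ.smul · a) fun m n => hℳ.add_smul m n a

theorem isGrSub_sSup (hℳ : ℳ.IsGraded 𝒜) {S : Set (AddSubgroup M)}
    (hS : ∀ N ∈ S, ℳ.IsGrSub N) : ℳ.IsGrSub (sSup S) := by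
  refine isGrSub_iff.mpr ⟨fun m hm a => ?_, sSup_le fun N hN => ?_⟩
  · have : sSup S ≤ (sSup S).comap (hℳ.smulRight a) :=
      sSup_le fun N hN x hx => le_sSup hN ((hS N hN).1 x hx a)
    exact this hm
  · exact (isGrSub_iff.mp (hS N hN)).2.trans
      (AddSubgroup.map_mono (decompositionsIn_mono (le_sSup hN)))

end IsGraded

section GrSubLattice

variable [AddCommGroup R] {𝒜 : GRingData Γ R}

def grSubLattice (hℳ : ℳ.IsGraded 𝒜) : CompleteSublattice (AddSubgroup M) :=
  .mk' {N | ℳ.IsGrSub N} (fun _ hS => hℳ.isGrSub_sSup hS) (fun _ hS => hℳ.isGrSub_sInf hS)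

variable {hℳ : ℳ.IsGraded 𝒜}

theorem isCoatom_iff {N : ℳ.grSubLattice hℳ} : IsCoatom N ↔ ℳ.IsGrMaximalSub N := by
  refine ⟨fun h => ⟨N.2, fun hN => h.1 (Subtype.ext hN), fun X hX hNX => ?_⟩,
    fun ⟨_, hN, hmax⟩ => ⟨fun h => hN (congrArg Subtype.val h), fun X hNX => ?_⟩⟩
  · exact ((h.le_iff (x := ⟨X, hX⟩)).mp hNX).symm.imp (congrArg Subtype.val)
      (congrArg Subtype.val)
  · exact Subtype.ext ((hmax X X.2 hNX.le).resolve_left fun h => hNX.ne' (Subtype.ext h))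

theorem isAtom_iff {N : ℳ.grSubLattice hℳ} : IsAtom N ↔ ℳ.IsGrSimpleSub N := by
  refine ⟨fun h => ⟨N.2, fun hN => h.1 (Subtype.ext hN), fun X hX hXN => ?_⟩,
    fun ⟨_, hN, hmin⟩ => ⟨fun h => hN (congrArg Subtype.val h), fun X hXN => ?_⟩⟩
  · exact ((h.le_iff (x := ⟨X, hX⟩)).mp hXN).imp (congrArg Subtype.val) (congrArg Subtype.val)
  · exact Subtype.ext ((hmin X X.2 hXN.le).resolve_right fun h => hXN.ne (Subtype.ext h))

theorem isSuperfluous_iff {N : ℳ.grSubLattice hℳ} : IsSuperfluous N ↔ ℳ.GrSuperfluous N :=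
  ⟨fun h X hX hNX => congrArg Subtype.val (h ⟨X, hX⟩ (Subtype.ext hNX)),
    fun h X hNX => Subtype.ext (h X X.2 (congrArg Subtype.val hNX))⟩

theorem isEssential_iff {N : ℳ.grSubLattice hℳ} : IsEssential N ↔ ℳ.GrEssential N :=
  ⟨fun h X hX hNX => congrArg Subtype.val (h ⟨X, hX⟩ (Subtype.ext hNX)),
    fun h X hNX => Subtype.ext (h X X.2 (congrArg Subtype.val hNX))⟩

theorem image_coe_setOf {Q : ℳ.grSubLattice hℳ → Prop} {P : AddSubgroup M → Prop}
    (hQ : ∀ N, Q N ↔ P N) (hP : ∀ N, P N → ℳ.IsGrSub N) :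
    (↑) '' {N | Q N} = {N | P N} :=
  Set.ext fun N => ⟨by rintro ⟨N, hN, rfl⟩; exact (hQ N).mp hN,
    fun hN => ⟨⟨N, hP N hN⟩, (hQ _).mpr hN, rfl⟩⟩

variable (hℳ)

theorem grRad_eq_coe_sInf_coatoms :
    ℳ.grRad = ↑(sInf {N : ℳ.grSubLattice hℳ | IsCoatom N}) :=
  congrArg sInf (image_coe_setOf (fun _ => isCoatom_iff) fun _ hN => hN.1).symm

theorem grSoc_eq_coe_sSup_atoms : ℳ.grSoc = ↑(sSup {N : ℳ.grSubLattice hℳ | IsAtom N}) :=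
  congrArg sSup (image_coe_setOf (fun _ => isAtom_iff) fun _ hN => hN.1).symm

theorem sSup_grSuperfluous_eq_coe :
    sSup {N | ℳ.IsGrSub N ∧ ℳ.GrSuperfluous N} =
      ↑(sSup {N : ℳ.grSubLattice hℳ | IsSuperfluous N}) :=
  congrArg sSup (image_coe_setOf (fun N => isSuperfluous_iff.trans (and_iff_right N.2).symm)
    fun _ hN => hN.1).symm

theorem sInf_grEssential_eq_coe :
    sInf {N | ℳ.IsGrSub N ∧ ℳ.GrEssential N} =
      ↑(sInf {N : ℳ.grSubLattice hℳ | IsEssential N}) :=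
  congrArg sInf (image_coe_setOf (fun N => isEssential_iff.trans (and_iff_right N.2).symm)
    fun _ hN => hN.1).symm

end GrSubLattice

end GModData

theorem grRad_eq_sSup_superfluous_and_grSoc_eq_sInf_essential_general
    {Γ : Type u} [Groupoid.{u} Γ] {R : Type u} [AddCommGroup R] {M : Type u}
    [AddCommGroup M] (𝒜 : GRingData Γ R)
    (ℳ : GModData Γ R M) (hℳ : ℳ.IsGraded 𝒜) :
    ℳ.grRad = sSup {N : AddSubgroup M | ℳ.IsGrSub N ∧ ℳ.GrSuperfluous N} ∧
    ℳ.grSoc = sInf {N : AddSubgroup M | ℳ.IsGrSub N ∧ ℳ.GrEssential N} := by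
  constructor
  · rw [GModData.grRad_eq_coe_sInf_coatoms hℳ, GModData.sSup_grSuperfluous_eq_coe hℳ,
      sInf_coatoms_eq_sSup_isSuperfluous]
  · rw [GModData.grSoc_eq_coe_sSup_atoms hℳ, GModData.sInf_grEssential_eq_coe hℳ,
      sSup_atoms_eq_sInf_isEssential]

/-- Let `R` be a `Γ`-graded ring and `M` a `Γ`-graded right
`R`-module. Then (1) `rad^gr(M)` is the sum of all gr-superfluous graded
submodules of `M`; (2) `soc_gr(M)` is the intersection of all gr-essential
graded submodules of `M`. -/
theorem grRad_eq_sSup_superfluous_and_grSoc_eq_sInf_essential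
    {Γ : Type u} [Groupoid.{u} Γ] {R : Type u} [AddCommGroup R] {M : Type u}
    [AddCommGroup M] (𝒜 : GRingData Γ R) (h𝒜 : 𝒜.IsObjectUnital)
    (ℳ : GModData Γ R M) (hℳ : ℳ.IsGraded 𝒜) :
    ℳ.grRad = sSup {N : AddSubgroup M | ℳ.IsGrSub N ∧ ℳ.GrSuperfluous N} ∧
    ℳ.grSoc = sInf {N : AddSubgroup M | ℳ.IsGrSub N ∧ ℳ.GrEssential N} :=
  grRad_eq_sSup_superfluous_and_grSoc_eq_sInf_essential_general 𝒜 ℳ hℳ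
end
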